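/- arXiv:2601.16399 — 5 statements merged into one kernel-verified Lean document; each statement's English description precedes it below -/
import Mathlib

section
/- Assume ρ s > 0 for every state s. Let π₁, π₂ be policies with visitation distributions d₁ = d_ρ^{π₁} and d₂ = d_ρ^{π₂}, and define π' : S → A → ℝ by π'(s,a) = (d₁(s)·π₁(s,a) + d₂(s)·π₂(s,a)) / (d₁(s) + d₂(s)). Then: (i) π' is a policy (in particular the denominator is strictly positive for every s); (ii) d_ρ^{π'} = (1/2)·d₁ + (1/2)·d₂; and (iii) J(π') = (1/2)·J(π₁) + (1/2)·J(π₂). -/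
open Finset Matrix

noncomputable section

variable {S A : Type*}

/-- A transition kernel: nonnegative entries, rows summing to one. -/
def IsKernel [Fintype S] [Fintype A] (K : S → A → S → ℝ) : Prop :=
  (∀ s a s', 0 ≤ K s a s') ∧ (∀ s a, ∑ s', K s a s' = 1)

/-- A (stochastic) policy: nonnegative entries, rows summing to one. -/
def IsPolicy [Fintype A] (π : S → A → ℝ) : Prop :=
  (∀ s a, 0 ≤ π s a) ∧ (∀ s, ∑ a, π s a = 1)

/-- The policy-induced transition matrix `P^π`. -/
def Pmat [Fintype A] (K : S → A → S → ℝ) (π : S → A → ℝ) : Matrix S S ℝ :=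
  Matrix.of fun s s' => ∑ a, π s a * K s a s'

/-- The entropy `E(π, s)` of a policy at state `s`. -/
def entS [Fintype A] (π : S → A → ℝ) (s : S) : ℝ :=
  ∑ a, -(π s a * Real.log (π s a))

/-- The entropy-regularized one-step cost `c_τ^π`. -/
def regCost [Fintype A] (r : S → A → ℝ) (τ : ℝ) (π : S → A → ℝ) (s : S) : ℝ :=
  (∑ a, π s a * r s a) + τ * entS π s

/-- The entropy-regularized value function `V_τ^π`. -/
def Vreg [Fintype S] [Fintype A] [DecidableEq S] (K : S → A → S → ℝ) (r : S → A → ℝ)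
    (γ τ : ℝ) (π : S → A → ℝ) : S → ℝ :=
  ∑' k : ℕ, γ ^ k • ((Pmat K π) ^ k *ᵥ regCost r τ π)

/-- The entropy-regularized expected return `J_τ(π)`. -/
def Jreg [Fintype S] [Fintype A] [DecidableEq S] (K : S → A → S → ℝ) (r : S → A → ℝ)
    (γ τ : ℝ) (ρ : S → ℝ) (π : S → A → ℝ) : ℝ :=
  ∑ s, ρ s * Vreg K r γ τ π s

/-- The discounted state-visitation distribution `d_ρ^π`. -/
def dvisit [Fintype S] [Fintype A] [DecidableEq S] (K : S → A → S → ℝ)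
    (γ : ℝ) (ρ : S → ℝ) (π : S → A → ℝ) : S → ℝ :=
  (1 - γ) • ∑' k : ℕ, γ ^ k • (((Pmat K π)ᵀ) ^ k *ᵥ ρ)

namespace Stmt2Aux

set_option linter.unusedSectionVars false

section MatrixLemmas

variable [Fintype S] [Fintype A] [DecidableEq S]

/-- A row-stochastic matrix. -/
def Stoch [Fintype S] (M : Matrix S S ℝ) : Prop :=
  (∀ s s', 0 ≤ M s s') ∧ (∀ s, ∑ s', M s s' = 1)

lemma stoch_Pmat {K : S → A → S → ℝ} (hK : IsKernel K) {π : S → A → ℝ}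
    (hπ : IsPolicy π) : Stoch (Pmat K π) := by
  refine ⟨fun s s' => Finset.sum_nonneg fun a _ => mul_nonneg (hπ.1 s a) (hK.1 s a s'),
    fun s => ?_⟩
  show ∑ s', ∑ a, π s a * K s a s' = 1
  rw [Finset.sum_comm]
  have h : ∀ a, ∑ s', π s a * K s a s' = π s a := fun a => by
    rw [← Finset.mul_sum, hK.2 s a, mul_one]
  simp_rw [h]
  exact hπ.2 s

lemma stoch_pow {M : Matrix S S ℝ} (hM : Stoch M) (k : ℕ) : Stoch (M ^ k) := by
  induction k with
  | zero =>
    rw [pow_zero]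
    refine ⟨fun s s' => ?_, fun s => ?_⟩
    · rw [Matrix.one_apply]; split <;> norm_num
    · simp [Matrix.one_apply]
  | succ k ih =>
    rw [pow_succ]
    refine ⟨fun s s' => ?_, fun s => ?_⟩
    · rw [Matrix.mul_apply]
      exact Finset.sum_nonneg fun t _ => mul_nonneg (ih.1 s t) (hM.1 t s')
    · simp_rw [Matrix.mul_apply]
      rw [Finset.sum_comm]
      have h : ∀ t, ∑ s', (M ^ k) s t * M t s' = (M ^ k) s t := fun t => by
        rw [← Finset.mul_sum, hM.2 t, mul_one]
      simp_rw [h]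
      exact ih.2 s

variable {M : Matrix S S ℝ} {ρ : S → ℝ} {γ : ℝ}

lemma w_apply (k : ℕ) (s : S) : ((Mᵀ) ^ k *ᵥ ρ) s = ∑ t, (M ^ k) t s * ρ t := by
  rw [← Matrix.transpose_pow]
  simp [Matrix.mulVec, dotProduct, Matrix.transpose_apply]

lemma w_nonneg (hM : Stoch M) (hρ : ∀ s, 0 ≤ ρ s) (k : ℕ) (s : S) :
    0 ≤ ((Mᵀ) ^ k *ᵥ ρ) s := by
  rw [w_apply]
  exact Finset.sum_nonneg fun t _ => mul_nonneg ((stoch_pow hM k).1 t s) (hρ t)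

lemma w_sum (hM : Stoch M) (hρ1 : ∑ s, ρ s = 1) (k : ℕ) :
    ∑ s, ((Mᵀ) ^ k *ᵥ ρ) s = 1 := by
  simp_rw [w_apply]
  rw [Finset.sum_comm]
  have h : ∀ t, ∑ s, (M ^ k) t s * ρ t = ρ t := fun t => by
    rw [← Finset.sum_mul, (stoch_pow hM k).2 t, one_mul]
  simp_rw [h]
  exact hρ1

lemma w_le_one (hM : Stoch M) (hρ : ∀ s, 0 ≤ ρ s) (hρ1 : ∑ s, ρ s = 1) (k : ℕ) (s : S) :
    ((Mᵀ) ^ k *ᵥ ρ) s ≤ 1 := by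
  rw [← w_sum hM hρ1 k]
  exact Finset.single_le_sum (fun t _ => w_nonneg hM hρ k t) (Finset.mem_univ s)

lemma summable_w (hM : Stoch M) (hρ : ∀ s, 0 ≤ ρ s) (hρ1 : ∑ s, ρ s = 1)
    (hγ0 : 0 ≤ γ) (hγ1 : γ < 1) (s : S) :
    Summable fun k : ℕ => γ ^ k * ((Mᵀ) ^ k *ᵥ ρ) s := by
  refine Summable.of_nonneg_of_le
    (fun k => mul_nonneg (pow_nonneg hγ0 k) (w_nonneg hM hρ k s))
    (fun k => ?_) (summable_geometric_of_lt_one hγ0 hγ1)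
  calc γ ^ k * ((Mᵀ) ^ k *ᵥ ρ) s ≤ γ ^ k * 1 :=
        mul_le_mul_of_nonneg_left (w_le_one hM hρ hρ1 k s) (pow_nonneg hγ0 k)
    _ = γ ^ k := mul_one _

lemma summable_wfun (hM : Stoch M) (hρ : ∀ s, 0 ≤ ρ s) (hρ1 : ∑ s, ρ s = 1)
    (hγ0 : 0 ≤ γ) (hγ1 : γ < 1) :
    Summable fun k : ℕ => γ ^ k • ((Mᵀ) ^ k *ᵥ ρ) := by
  rw [Pi.summable]
  intro s
  simp only [Pi.smul_apply, smul_eq_mul]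
  exact summable_w hM hρ hρ1 hγ0 hγ1 s

/-- The geometric series satisfies the Bellman-type fixed-point equation. -/
lemma tsum_w_eq (hsum : ∀ t : S, Summable fun k : ℕ => γ ^ k * ((Mᵀ) ^ k *ᵥ ρ) t) (s : S) :
    (∑' k : ℕ, γ ^ k * ((Mᵀ) ^ k *ᵥ ρ) s)
      = ρ s + γ * ∑ t, M t s * ∑' k : ℕ, γ ^ k * ((Mᵀ) ^ k *ᵥ ρ) t := by
  rw [Summable.tsum_eq_zero_add (hsum s)]
  have h0 : γ ^ 0 * ((Mᵀ) ^ 0 *ᵥ ρ) s = ρ s := by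
    simp [Matrix.one_mulVec]
  rw [h0]
  congr 1
  have hstep : ∀ (k : ℕ) (s : S), γ ^ (k + 1) * ((Mᵀ) ^ (k + 1) *ᵥ ρ) s
      = γ * ∑ t, M t s * (γ ^ k * ((Mᵀ) ^ k *ᵥ ρ) t) := by
    intro k s
    have h1 : (Mᵀ) ^ (k + 1) *ᵥ ρ = Mᵀ *ᵥ ((Mᵀ) ^ k *ᵥ ρ) := by
      rw [Matrix.mulVec_mulVec, ← pow_succ']
    rw [h1]
    have h2 : (Mᵀ *ᵥ ((Mᵀ) ^ k *ᵥ ρ)) s = ∑ t, M t s * ((Mᵀ) ^ k *ᵥ ρ) t := by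
      simp [Matrix.mulVec, dotProduct, Matrix.transpose_apply]
    rw [h2, pow_succ, Finset.mul_sum, Finset.mul_sum]
    exact Finset.sum_congr rfl fun t _ => by ring
  simp_rw [hstep]
  rw [tsum_mul_left]
  congr 1
  rw [Summable.tsum_finsetSum fun t _ => (hsum t).mul_left (M t s)]
  exact Finset.sum_congr rfl fun t _ => tsum_mul_left

/-- Uniqueness of solutions of the Bellman-type equation (via an `ℓ¹` contraction bound). -/
lemma fixed_unique (hM : Stoch M) (hγ0 : 0 ≤ γ) (hγ1 : γ < 1) {c x y : S → ℝ}
    (hx : ∀ s, x s = c s + γ * ∑ t, M t s * x t)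
    (hy : ∀ s, y s = c s + γ * ∑ t, M t s * y t) : x = y := by
  set e : S → ℝ := fun s => x s - y s with he_def
  have he : ∀ s, e s = γ * ∑ t, M t s * e t := by
    intro s
    have h : ∑ t, M t s * e t = (∑ t, M t s * x t) - ∑ t, M t s * y t := by
      rw [← Finset.sum_sub_distrib]
      exact Finset.sum_congr rfl fun t _ => by simp [he_def]; ring
    simp only [he_def, h, hx s, hy s]
    simp only [mul_sub, Finset.sum_sub_distrib]
    ring
  have key : ∑ s, |e s| ≤ γ * ∑ s, |e s| := by
    have h1 : ∀ s, |e s| ≤ γ * ∑ t, M t s * |e t| := by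
      intro s
      rw [he s, abs_mul, abs_of_nonneg hγ0]
      refine mul_le_mul_of_nonneg_left ?_ hγ0
      calc |∑ t, M t s * e t| ≤ ∑ t, |M t s * e t| := Finset.abs_sum_le_sum_abs _ _
        _ = ∑ t, M t s * |e t| := Finset.sum_congr rfl fun t _ => by
              rw [abs_mul, abs_of_nonneg (hM.1 t s)]
    calc ∑ s, |e s| ≤ ∑ s, γ * ∑ t, M t s * |e t| := Finset.sum_le_sum fun s _ => h1 s
      _ = γ * ∑ s, ∑ t, M t s * |e t| := by rw [← Finset.mul_sum]
      _ = γ * ∑ t, ∑ s, M t s * |e t| := by rw [Finset.sum_comm]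
      _ = γ * ∑ t, |e t| := by
            congr 1
            exact Finset.sum_congr rfl fun t _ => by
              rw [← Finset.sum_mul, hM.2 t, one_mul]
  have habs0 : ∑ s, |e s| = 0 := by
    have hnn : 0 ≤ ∑ s, |e s| := Finset.sum_nonneg fun s _ => abs_nonneg _
    nlinarith
  funext s
  have h0 : |e s| = 0 :=
    (Finset.sum_eq_zero_iff_of_nonneg (fun t _ => abs_nonneg (e t))).mp habs0 s
      (Finset.mem_univ s)
  have h1 : e s = 0 := abs_eq_zero.mp h0
  simpa [he_def, sub_eq_zero] using h1

end MatrixLemmas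

section Dvisit

variable [Fintype S] [Fintype A] [DecidableEq S]
variable {K : S → A → S → ℝ} {ρ : S → ℝ} {γ : ℝ} {π : S → A → ℝ}

lemma dvisit_apply (hK : IsKernel K) (hπ : IsPolicy π) (hρ : ∀ s, 0 ≤ ρ s)
    (hρ1 : ∑ s, ρ s = 1) (hγ0 : 0 ≤ γ) (hγ1 : γ < 1) (s : S) :
    dvisit K γ ρ π s = (1 - γ) * ∑' k : ℕ, γ ^ k * (((Pmat K π)ᵀ) ^ k *ᵥ ρ) s := by
  unfold dvisit
  rw [Pi.smul_apply, smul_eq_mul,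
    tsum_apply (summable_wfun (stoch_Pmat hK hπ) hρ hρ1 hγ0 hγ1)]
  simp only [Pi.smul_apply, smul_eq_mul]

lemma dvisit_pos (hK : IsKernel K) (hπ : IsPolicy π) (hρ : ∀ s, 0 < ρ s)
    (hρ1 : ∑ s, ρ s = 1) (hγ0 : 0 < γ) (hγ1 : γ < 1) (s : S) :
    0 < dvisit K γ ρ π s := by
  have hρ' : ∀ s, 0 ≤ ρ s := fun s => (hρ s).le
  rw [dvisit_apply hK hπ hρ' hρ1 hγ0.le hγ1 s]
  have hM := stoch_Pmat hK hπ
  have hterm0 : (γ : ℝ) ^ 0 * (((Pmat K π)ᵀ) ^ 0 *ᵥ ρ) s = ρ s := by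
    simp [Matrix.one_mulVec]
  have hle : ρ s ≤ ∑' k : ℕ, γ ^ k * (((Pmat K π)ᵀ) ^ k *ᵥ ρ) s := by
    rw [← hterm0]
    exact Summable.le_tsum (summable_w hM hρ' hρ1 hγ0.le hγ1 s) 0
      (fun k _ => mul_nonneg (pow_nonneg hγ0.le k) (w_nonneg hM hρ' k s))
  have : 0 < ∑' k : ℕ, γ ^ k * (((Pmat K π)ᵀ) ^ k *ᵥ ρ) s := lt_of_lt_of_le (hρ s) hle
  exact mul_pos (by linarith) this

lemma dvisit_fixed (hK : IsKernel K) (hπ : IsPolicy π) (hρ : ∀ s, 0 ≤ ρ s)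
    (hρ1 : ∑ s, ρ s = 1) (hγ0 : 0 ≤ γ) (hγ1 : γ < 1) (s : S) :
    dvisit K γ ρ π s = (1 - γ) * ρ s + γ * ∑ t, Pmat K π t s * dvisit K γ ρ π t := by
  have hM := stoch_Pmat hK hπ
  have hsum := fun t => summable_w (M := Pmat K π) (ρ := ρ) hM hρ hρ1 hγ0 hγ1 t
  have h := tsum_w_eq (M := Pmat K π) (ρ := ρ) hsum s
  rw [dvisit_apply hK hπ hρ hρ1 hγ0 hγ1 s, h]
  have hrw : ∀ t, Pmat K π t s * dvisit K γ ρ π t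
      = (1 - γ) * (Pmat K π t s * ∑' k : ℕ, γ ^ k * (((Pmat K π)ᵀ) ^ k *ᵥ ρ) t) := by
    intro t
    rw [dvisit_apply hK hπ hρ hρ1 hγ0 hγ1 t]
    ring
  simp_rw [hrw]
  rw [← Finset.mul_sum]
  ring

/-- `dvisit` is the unique solution of the Bellman flow equation. -/
lemma dvisit_eq_of_fixed (hK : IsKernel K) (hπ : IsPolicy π) (hρ : ∀ s, 0 ≤ ρ s)
    (hρ1 : ∑ s, ρ s = 1) (hγ0 : 0 ≤ γ) (hγ1 : γ < 1) {x : S → ℝ}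
    (hx : ∀ s, x s = (1 - γ) * ρ s + γ * ∑ t, Pmat K π t s * x t) :
    dvisit K γ ρ π = x :=
  fixed_unique (stoch_Pmat hK hπ) hγ0 hγ1 (c := fun s => (1 - γ) * ρ s)
    (dvisit_fixed hK hπ hρ hρ1 hγ0 hγ1) hx

/-- The unregularized return as a `dvisit`-weighted sum of one-step rewards. -/
lemma Jreg_eq (hK : IsKernel K) (hπ : IsPolicy π) (hρ : ∀ s, 0 ≤ ρ s)
    (hρ1 : ∑ s, ρ s = 1) (hγ0 : 0 ≤ γ) (hγ1 : γ < 1) (r : S → A → ℝ) :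
    Jreg K r γ 0 ρ π = (1 - γ)⁻¹ * ∑ s, dvisit K γ ρ π s * (∑ a, π s a * r s a) := by
  set M : Matrix S S ℝ := Pmat K π with hM_def
  have hM := stoch_Pmat hK hπ
  set c : S → ℝ := fun s => ∑ a, π s a * r s a with hc_def
  have hcost : regCost r 0 π = c := by
    funext s; simp [regCost, hc_def]
  set C : ℝ := ∑ t, |c t| with hC_def
  have hbound : ∀ (k : ℕ) (s : S), |(M ^ k *ᵥ c) s| ≤ C := by
    intro k s
    have : (M ^ k *ᵥ c) s = ∑ t, (M ^ k) s t * c t := by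
      simp [Matrix.mulVec, dotProduct]
    rw [this]
    calc |∑ t, (M ^ k) s t * c t| ≤ ∑ t, |(M ^ k) s t * c t| :=
          Finset.abs_sum_le_sum_abs _ _
      _ ≤ ∑ t, |c t| := Finset.sum_le_sum fun t _ => by
          rw [abs_mul, abs_of_nonneg ((stoch_pow hM k).1 s t)]
          have h1 : (M ^ k) s t ≤ 1 := by
            rw [← (stoch_pow hM k).2 s]
            exact Finset.single_le_sum (fun u _ => (stoch_pow hM k).1 s u)
              (Finset.mem_univ t)
          nlinarith [abs_nonneg (c t), (stoch_pow hM k).1 s t]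
  have hVsum : ∀ s, Summable fun k : ℕ => γ ^ k * (M ^ k *ᵥ c) s := by
    intro s
    refine Summable.of_norm_bounded
      ((summable_geometric_of_lt_one hγ0 hγ1).mul_right C) (fun k => ?_)
    rw [Real.norm_eq_abs, abs_mul, abs_of_nonneg (pow_nonneg hγ0 k)]
    exact mul_le_mul_of_nonneg_left (hbound k s) (pow_nonneg hγ0 k)
  have hVfun : Summable fun k : ℕ => γ ^ k • (M ^ k *ᵥ c) := by
    rw [Pi.summable]
    intro s
    simp only [Pi.smul_apply, smul_eq_mul]
    exact hVsum s
  have hV : ∀ s, Vreg K r γ 0 π s = ∑' k : ℕ, γ ^ k * (M ^ k *ᵥ c) s := by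
    intro s
    unfold Vreg
    rw [hcost, ← hM_def, tsum_apply hVfun]
    exact tsum_congr fun k => by simp [smul_eq_mul]
  -- main computation
  unfold Jreg
  simp_rw [hV]
  have hswap : ∑ s, ρ s * ∑' k : ℕ, γ ^ k * (M ^ k *ᵥ c) s
      = ∑' k : ℕ, ∑ s, ρ s * (γ ^ k * (M ^ k *ᵥ c) s) := by
    rw [Summable.tsum_finsetSum fun s _ => (hVsum s).mul_left (ρ s)]
    exact Finset.sum_congr rfl fun s _ => tsum_mul_left.symm
  rw [hswap]
  have hinner : ∀ k : ℕ, ∑ s, ρ s * (γ ^ k * (M ^ k *ᵥ c) s)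
      = ∑ t, c t * (γ ^ k * ((Mᵀ) ^ k *ᵥ ρ) t) := by
    intro k
    have h1 : ∀ s, ρ s * (γ ^ k * (M ^ k *ᵥ c) s)
        = ∑ t, γ ^ k * ((M ^ k) s t * (ρ s * c t)) := by
      intro s
      have : (M ^ k *ᵥ c) s = ∑ t, (M ^ k) s t * c t := by
        simp [Matrix.mulVec, dotProduct]
      rw [this, Finset.mul_sum, Finset.mul_sum]
      exact Finset.sum_congr rfl fun t _ => by ring
    simp_rw [h1]
    rw [Finset.sum_comm]
    refine Finset.sum_congr rfl fun t _ => ?_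
    rw [w_apply]
    rw [Finset.mul_sum, Finset.mul_sum]
    exact Finset.sum_congr rfl fun s _ => by ring
  have hswap2 : ∑' k : ℕ, ∑ t, c t * (γ ^ k * ((Mᵀ) ^ k *ᵥ ρ) t)
      = ∑ t, c t * ∑' k : ℕ, γ ^ k * ((Mᵀ) ^ k *ᵥ ρ) t := by
    rw [Summable.tsum_finsetSum fun t _ => (summable_w hM hρ hρ1 hγ0 hγ1 t).mul_left (c t)]
    exact Finset.sum_congr rfl fun t _ => tsum_mul_left
  calc ∑' k : ℕ, ∑ s, ρ s * (γ ^ k * (M ^ k *ᵥ c) s)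
      = ∑' k : ℕ, ∑ t, c t * (γ ^ k * ((Mᵀ) ^ k *ᵥ ρ) t) := tsum_congr hinner
    _ = ∑ t, c t * ∑' k : ℕ, γ ^ k * ((Mᵀ) ^ k *ᵥ ρ) t := hswap2
    _ = (1 - γ)⁻¹ * ∑ t, dvisit K γ ρ π t * c t := by
        rw [Finset.mul_sum]
        refine Finset.sum_congr rfl fun t _ => ?_
        rw [dvisit_apply hK hπ hρ hρ1 hγ0 hγ1 t]
        have hne : (1 : ℝ) - γ ≠ 0 := by linarith
        field_simp
        ring

end Dvisit

end Stmt2Aux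

/-- the visitation-weighted mixture of two policies is a policy, its visitation
distribution is the average of the two, and its return is the average of the two returns. -/
theorem stmt_2 [Fintype S] [Fintype A] [DecidableEq S] [Nonempty S] [Nonempty A]
    (K : S → A → S → ℝ) (hK : IsKernel K)
    (γ : ℝ) (hγ0 : 0 < γ) (hγ1 : γ < 1)
    (ρ : S → ℝ) (hρpos : ∀ s, 0 < ρ s) (hρ1 : ∑ s, ρ s = 1)
    (r : S → A → ℝ)
    (π₁ π₂ : S → A → ℝ) (h1 : IsPolicy π₁) (h2 : IsPolicy π₂)
    (π' : S → A → ℝ)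
    (hπ' : π' = fun s a =>
      (dvisit K γ ρ π₁ s * π₁ s a + dvisit K γ ρ π₂ s * π₂ s a) /
        (dvisit K γ ρ π₁ s + dvisit K γ ρ π₂ s)) :
    (∀ s, 0 < dvisit K γ ρ π₁ s + dvisit K γ ρ π₂ s) ∧
    IsPolicy π' ∧
    (dvisit K γ ρ π' = fun s => (1 / 2) * dvisit K γ ρ π₁ s + (1 / 2) * dvisit K γ ρ π₂ s) ∧
    Jreg K r γ 0 ρ π' = (1 / 2) * Jreg K r γ 0 ρ π₁ + (1 / 2) * Jreg K r γ 0 ρ π₂ := by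
  have hρ0 : ∀ s, 0 ≤ ρ s := fun s => (hρpos s).le
  set d₁ : S → ℝ := dvisit K γ ρ π₁ with hd₁
  set d₂ : S → ℝ := dvisit K γ ρ π₂ with hd₂
  have hd₁pos : ∀ s, 0 < d₁ s := fun s => Stmt2Aux.dvisit_pos hK h1 hρpos hρ1 hγ0 hγ1 s
  have hd₂pos : ∀ s, 0 < d₂ s := fun s => Stmt2Aux.dvisit_pos hK h2 hρpos hρ1 hγ0 hγ1 s
  have hden : ∀ s, 0 < d₁ s + d₂ s := fun s => by linarith [hd₁pos s, hd₂pos s]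
  -- π' is a policy
  have hπ'pol : IsPolicy π' := by
    constructor
    · intro s a
      rw [hπ']
      exact div_nonneg (add_nonneg (mul_nonneg (hd₁pos s).le (h1.1 s a))
        (mul_nonneg (hd₂pos s).le (h2.1 s a))) (hden s).le
    · intro s
      rw [hπ']
      simp only
      rw [← Finset.sum_div]
      have hnum : ∑ a, (d₁ s * π₁ s a + d₂ s * π₂ s a) = d₁ s + d₂ s := by
        rw [Finset.sum_add_distrib, ← Finset.mul_sum, ← Finset.mul_sum, h1.2 s, h2.2 s,
          mul_one, mul_one]
      rw [hnum, div_self (hden s).ne']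
  -- the key pointwise identity for the mixture policy
  have key : ∀ s a, (d₁ s + d₂ s) * π' s a = d₁ s * π₁ s a + d₂ s * π₂ s a := by
    intro s a
    rw [hπ']
    simp only
    rw [mul_comm, div_mul_cancel₀ _ (hden s).ne']
  -- the averaged visitation distribution
  set x : S → ℝ := fun s => (1 / 2) * d₁ s + (1 / 2) * d₂ s with hx_def
  have hfix1 := Stmt2Aux.dvisit_fixed hK h1 hρ0 hρ1 hγ0.le hγ1
  have hfix2 := Stmt2Aux.dvisit_fixed hK h2 hρ0 hρ1 hγ0.le hγ1
  have hx : ∀ s, x s = (1 - γ) * ρ s + γ * ∑ t, Pmat K π' t s * x t := by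
    intro s
    have hsum : ∑ t, Pmat K π' t s * x t
        = (1 / 2) * (∑ t, Pmat K π₁ t s * d₁ t) + (1 / 2) * (∑ t, Pmat K π₂ t s * d₂ t) := by
      rw [Finset.mul_sum, Finset.mul_sum, ← Finset.sum_add_distrib]
      refine Finset.sum_congr rfl fun t _ => ?_
      show (∑ a, π' t a * K t a s) * x t
        = 1 / 2 * ((∑ a, π₁ t a * K t a s) * d₁ t) + 1 / 2 * ((∑ a, π₂ t a * K t a s) * d₂ t)
      rw [hx_def]
      simp only
      rw [Finset.sum_mul, Finset.sum_mul, Finset.sum_mul, Finset.mul_sum, Finset.mul_sum,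
        ← Finset.sum_add_distrib]
      refine Finset.sum_congr rfl fun a _ => ?_
      linear_combination (K t a s / 2) * key t a
    rw [hsum, hx_def]
    simp only
    linear_combination (1 / 2) * hfix1 s + (1 / 2) * hfix2 s
  have hdv' : dvisit K γ ρ π' = x := Stmt2Aux.dvisit_eq_of_fixed hK hπ'pol hρ0 hρ1 hγ0.le hγ1 hx
  refine ⟨hden, hπ'pol, hdv', ?_⟩
  -- the returns
  have hJ' := Stmt2Aux.Jreg_eq hK hπ'pol hρ0 hρ1 hγ0.le hγ1 r
  have hJ1 := Stmt2Aux.Jreg_eq hK h1 hρ0 hρ1 hγ0.le hγ1 r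
  have hJ2 := Stmt2Aux.Jreg_eq hK h2 hρ0 hρ1 hγ0.le hγ1 r
  rw [hdv'] at hJ'
  rw [hJ', hJ1, hJ2]
  have hsum : ∑ s, x s * (∑ a, π' s a * r s a)
      = ∑ s, ((1 / 2) * (d₁ s * ∑ a, π₁ s a * r s a)
          + (1 / 2) * (d₂ s * ∑ a, π₂ s a * r s a)) := by
    refine Finset.sum_congr rfl fun s _ => ?_
    rw [hx_def]
    simp only
    rw [Finset.mul_sum,
      show (1 : ℝ) / 2 * (d₁ s * ∑ a, π₁ s a * r s a)
          = ∑ a, 1 / 2 * (d₁ s * (π₁ s a * r s a)) by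
        rw [Finset.mul_sum, Finset.mul_sum],
      show (1 : ℝ) / 2 * (d₂ s * ∑ a, π₂ s a * r s a)
          = ∑ a, 1 / 2 * (d₂ s * (π₂ s a * r s a)) by
        rw [Finset.mul_sum, Finset.mul_sum],
      ← Finset.sum_add_distrib]
    refine Finset.sum_congr rfl fun a _ => ?_
    linear_combination (r s a / 2) * key s a
  rw [hsum, Finset.sum_add_distrib, ← Finset.mul_sum, ← Finset.mul_sum]
  ring
end
end

section
/- For any two policies π and π': ∑_s |d_ρ^π(s) − d_ρ^{π'}(s)| ≤ (γ/(1−γ)) · max_s ∑_a |π(s,a) − π'(s,a)|. -/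
open Finset Matrix

noncomputable section

variable {S A : Type*}

set_option linter.unusedSectionVars false
section helpers
variable {S : Type*} [Fintype S] [DecidableEq S]

lemma mulVecT_apply (M : Matrix S S ℝ) (v : S → ℝ) (j : S) :
    (Mᵀ *ᵥ v) j = ∑ i, M i j * v i := by
  simp [Matrix.mulVec, dotProduct, Matrix.transpose_apply]

lemma l1_mulVecT_le (M : Matrix S S ℝ) (v : S → ℝ) :
    ∑ j, |(Mᵀ *ᵥ v) j| ≤ ∑ i, |v i| * ∑ j, |M i j| := by
  calc ∑ j, |(Mᵀ *ᵥ v) j| ≤ ∑ j, ∑ i, |M i j| * |v i| := by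
        refine Finset.sum_le_sum fun j _ => ?_
        rw [mulVecT_apply]
        refine (Finset.abs_sum_le_sum_abs _ _).trans (le_of_eq ?_)
        simp [abs_mul]
    _ = ∑ i, |v i| * ∑ j, |M i j| := by
        rw [Finset.sum_comm]
        simp [Finset.mul_sum, mul_comm]

lemma mulVecT_nonneg (M : Matrix S S ℝ) (h0 : ∀ i j, 0 ≤ M i j) (v : S → ℝ)
    (hv : ∀ i, 0 ≤ v i) (j : S) : 0 ≤ (Mᵀ *ᵥ v) j := by
  rw [mulVecT_apply]
  exact Finset.sum_nonneg fun i _ => mul_nonneg (h0 i j) (hv i)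

lemma mulVecT_sum (M : Matrix S S ℝ) (h1 : ∀ i, ∑ j, M i j = 1) (v : S → ℝ) :
    ∑ j, (Mᵀ *ᵥ v) j = ∑ i, v i := by
  simp only [mulVecT_apply]
  rw [Finset.sum_comm]
  simp [← Finset.sum_mul, h1]

lemma l1_mulVecT_stoch_le (M : Matrix S S ℝ) (h0 : ∀ i j, 0 ≤ M i j)
    (h1 : ∀ i, ∑ j, M i j = 1) (v : S → ℝ) :
    ∑ j, |(Mᵀ *ᵥ v) j| ≤ ∑ i, |v i| := by
  refine (l1_mulVecT_le M v).trans (le_of_eq ?_)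
  refine Finset.sum_congr rfl fun i _ => ?_
  rw [show ∑ j, |M i j| = 1 by
    rw [← h1 i]; exact Finset.sum_congr rfl fun j _ => abs_of_nonneg (h0 i j), mul_one]

/-- powers of transpose applied to a nonneg prob vector stay nonneg with sum 1 -/
lemma powT_prob (M : Matrix S S ℝ) (h0 : ∀ i j, 0 ≤ M i j) (h1 : ∀ i, ∑ j, M i j = 1)
    (ρ : S → ℝ) (hρ0 : ∀ s, 0 ≤ ρ s) (hρ1 : ∑ s, ρ s = 1) (k : ℕ) :
    (∀ s, 0 ≤ (Mᵀ ^ k *ᵥ ρ) s) ∧ (∑ s, (Mᵀ ^ k *ᵥ ρ) s = 1) := by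
  induction k with
  | zero => simpa using ⟨hρ0, hρ1⟩
  | succ k ih =>
    have hrw : Mᵀ ^ (k+1) *ᵥ ρ = Mᵀ *ᵥ (Mᵀ ^ k *ᵥ ρ) := by
      rw [pow_succ', Matrix.mulVec_mulVec]
    rw [hrw]
    exact ⟨mulVecT_nonneg M h0 _ ih.1, (mulVecT_sum M h1 _).trans ih.2⟩

end helpers

set_option linter.unusedSectionVars false

section keylem
variable {S A : Type*} [Fintype S] [Fintype A] [DecidableEq S]

lemma Pmat_nonneg (K : S → A → S → ℝ) (hK : IsKernel K) {π : S → A → ℝ} (hπ : IsPolicy π)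
    (s s' : S) : 0 ≤ Pmat K π s s' :=
  Finset.sum_nonneg fun a _ => mul_nonneg (hπ.1 s a) (hK.1 s a s')

lemma Pmat_row_sum (K : S → A → S → ℝ) (hK : IsKernel K) {π : S → A → ℝ} (hπ : IsPolicy π)
    (s : S) : ∑ s', Pmat K π s s' = 1 := by
  simp only [Pmat, Matrix.of_apply]
  rw [Finset.sum_comm]
  simp [← Finset.mul_sum, hK.2, hπ.2]

lemma Pmat_diff_row (K : S → A → S → ℝ) (hK : IsKernel K) (π π' : S → A → ℝ)
    (s : S) : ∑ s', |Pmat K π s s' - Pmat K π' s s'| ≤ ∑ a, |π s a - π' s a| := by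
  have h : ∀ s', Pmat K π s s' - Pmat K π' s s' = ∑ a, (π s a - π' s a) * K s a s' := by
    intro s'
    simp [Pmat, sub_mul, Finset.sum_sub_distrib]
  calc ∑ s', |Pmat K π s s' - Pmat K π' s s'|
      ≤ ∑ s', ∑ a, |π s a - π' s a| * K s a s' := by
        refine Finset.sum_le_sum fun s' _ => ?_
        rw [h s']
        refine (Finset.abs_sum_le_sum_abs _ _).trans (le_of_eq ?_)
        refine Finset.sum_congr rfl fun a _ => ?_
        rw [abs_mul, abs_of_nonneg (hK.1 s a s')]
    _ = ∑ a, |π s a - π' s a| := by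
        rw [Finset.sum_comm]
        simp [← Finset.mul_sum, hK.2]

/-- Key induction: ℓ¹ distance between iterates grows at most linearly. -/
lemma iter_diff_le (K : S → A → S → ℝ) (hK : IsKernel K)
    (π π' : S → A → ℝ) (hπ : IsPolicy π) (hπ' : IsPolicy π')
    (ρ : S → ℝ) (hρ0 : ∀ s, 0 ≤ ρ s) (hρ1 : ∑ s, ρ s = 1)
    (ε : ℝ) (hε : ∀ s, ∑ a, |π s a - π' s a| ≤ ε) (k : ℕ) :
    ∑ s, |((Pmat K π)ᵀ ^ k *ᵥ ρ) s - ((Pmat K π')ᵀ ^ k *ᵥ ρ) s| ≤ k * ε := by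
  set P := Pmat K π
  set P' := Pmat K π'
  induction k with
  | zero => simp
  | succ k ih =>
    have hx : Pᵀ ^ (k+1) *ᵥ ρ = Pᵀ *ᵥ (Pᵀ ^ k *ᵥ ρ) := by
      rw [pow_succ', Matrix.mulVec_mulVec]
    have hy : P'ᵀ ^ (k+1) *ᵥ ρ = P'ᵀ *ᵥ (P'ᵀ ^ k *ᵥ ρ) := by
      rw [pow_succ', Matrix.mulVec_mulVec]
    set x := Pᵀ ^ k *ᵥ ρ
    set y := P'ᵀ ^ k *ᵥ ρ
    have hyprob := powT_prob P' (Pmat_nonneg K hK hπ') (Pmat_row_sum K hK hπ') ρ hρ0 hρ1 k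
    have hsplit0 : Pᵀ *ᵥ x - P'ᵀ *ᵥ y = Pᵀ *ᵥ (x - y) + (P - P')ᵀ *ᵥ y := by
      rw [Matrix.transpose_sub, Matrix.mulVec_sub, Matrix.sub_mulVec]
      abel
    have hsplit : ∀ s, (Pᵀ *ᵥ x) s - (P'ᵀ *ᵥ y) s
        = (Pᵀ *ᵥ (x - y)) s + ((P - P')ᵀ *ᵥ y) s := by
      intro s
      have := congrFun hsplit0 s
      simpa [Pi.sub_apply, Pi.add_apply] using this
    have h1 : ∑ s, |(Pᵀ *ᵥ (x - y)) s| ≤ ∑ s, |x s - y s| :=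
      l1_mulVecT_stoch_le P (Pmat_nonneg K hK hπ) (Pmat_row_sum K hK hπ) _
    have h2 : ∑ s, |((P - P')ᵀ *ᵥ y) s| ≤ ε := by
      refine (l1_mulVecT_le (P - P') y).trans ?_
      calc ∑ i, |y i| * ∑ j, |(P - P') i j| ≤ ∑ i, |y i| * ε := by
            refine Finset.sum_le_sum fun i _ => ?_
            exact mul_le_mul_of_nonneg_left
              ((Pmat_diff_row K hK π π' i).trans (hε i)) (abs_nonneg _)
        _ = ε := by
            rw [← Finset.sum_mul]
            rw [show ∑ i, |y i| = 1 from (Finset.sum_congr rfl fun i _ =>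
              abs_of_nonneg (hyprob.1 i)).trans hyprob.2, one_mul]
    calc ∑ s, |(Pᵀ ^ (k+1) *ᵥ ρ) s - (P'ᵀ ^ (k+1) *ᵥ ρ) s|
        = ∑ s, |(Pᵀ *ᵥ (x - y)) s + ((P - P')ᵀ *ᵥ y) s| := by
          rw [hx, hy]; exact Finset.sum_congr rfl fun s _ => by rw [hsplit s]
      _ ≤ ∑ s, (|(Pᵀ *ᵥ (x - y)) s| + |((P - P')ᵀ *ᵥ y) s|) :=
          Finset.sum_le_sum fun s _ => abs_add_le _ _
      _ ≤ ∑ s, |x s - y s| + ε := by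
          rw [Finset.sum_add_distrib]
          exact add_le_add (by simpa [Pi.sub_apply] using h1) h2
      _ ≤ k * ε + ε := add_le_add ih le_rfl
      _ = (k + 1 : ℕ) * ε := by push_cast; ring
end keylem

/-- the visitation distribution is Lipschitz in the policy:
`‖d_ρ^π − d_ρ^{π'}‖₁ ≤ (γ/(1−γ)) · max_s ‖π(s,·) − π'(s,·)‖₁`. -/
theorem stmt_4 [Fintype S] [Fintype A] [DecidableEq S] [Nonempty S] [Nonempty A]
    (K : S → A → S → ℝ) (hK : IsKernel K)
    (γ : ℝ) (hγ0 : 0 < γ) (hγ1 : γ < 1)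
    (ρ : S → ℝ) (hρ0 : ∀ s, 0 ≤ ρ s) (hρ1 : ∑ s, ρ s = 1)
    (r : S → A → ℝ)
    (π π' : S → A → ℝ) (hπ : IsPolicy π) (hπ' : IsPolicy π') :
    ∑ s, |dvisit K γ ρ π s - dvisit K γ ρ π' s| ≤
      (γ / (1 - γ)) * Finset.univ.sup' Finset.univ_nonempty (fun s => ∑ a, |π s a - π' s a|) := by
  classical
  have hγ' : (0:ℝ) < 1 - γ := by linarith
  set P := Pmat K π with hPdef
  set P' := Pmat K π' with hP'def
  set ε := Finset.univ.sup' Finset.univ_nonempty (fun s => ∑ a, |π s a - π' s a|) with hεdef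
  have hεle : ∀ s, ∑ a, |π s a - π' s a| ≤ ε := fun s => Finset.le_sup' (fun s => ∑ a, |π s a - π' s a|) (Finset.mem_univ s)
  have hε0 : 0 ≤ ε :=
    le_trans (Finset.sum_nonneg fun a _ => abs_nonneg _) (hεle (Classical.arbitrary S))
  set x : ℕ → S → ℝ := fun k => Pᵀ ^ k *ᵥ ρ with hxdef
  set y : ℕ → S → ℝ := fun k => P'ᵀ ^ k *ᵥ ρ with hydef
  have hxprob := powT_prob P (Pmat_nonneg K hK hπ) (Pmat_row_sum K hK hπ) ρ hρ0 hρ1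
  have hyprob := powT_prob P' (Pmat_nonneg K hK hπ') (Pmat_row_sum K hK hπ') ρ hρ0 hρ1
  have hxbd : ∀ k s, |x k s| ≤ 1 := by
    intro k s
    rw [abs_of_nonneg ((hxprob k).1 s)]
    calc x k s ≤ ∑ s', x k s' :=
          Finset.single_le_sum (fun i _ => (hxprob k).1 i) (Finset.mem_univ s)
      _ = 1 := (hxprob k).2
  have hybd : ∀ k s, |y k s| ≤ 1 := by
    intro k s
    rw [abs_of_nonneg ((hyprob k).1 s)]
    calc y k s ≤ ∑ s', y k s' :=
          Finset.single_le_sum (fun i _ => (hyprob k).1 i) (Finset.mem_univ s)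
      _ = 1 := (hyprob k).2
  have hgeo : Summable fun k : ℕ => γ ^ k := summable_geometric_of_lt_one hγ0.le hγ1
  have hsumx : ∀ s, Summable fun k => γ ^ k * x k s := by
    intro s
    refine Summable.of_norm_bounded hgeo fun k => ?_
    rw [Real.norm_eq_abs, abs_mul, abs_of_nonneg (pow_nonneg hγ0.le k)]
    exact mul_le_of_le_one_right (pow_nonneg hγ0.le k) (hxbd k s)
  have hsumy : ∀ s, Summable fun k => γ ^ k * y k s := by
    intro s
    refine Summable.of_norm_bounded hgeo fun k => ?_
    rw [Real.norm_eq_abs, abs_mul, abs_of_nonneg (pow_nonneg hγ0.le k)]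
    exact mul_le_of_le_one_right (pow_nonneg hγ0.le k) (hybd k s)
  have hd : ∀ s, dvisit K γ ρ π s = (1 - γ) * ∑' k, γ ^ k * x k s := by
    intro s
    have hsum : Summable (fun k : ℕ => γ ^ k • (Pᵀ ^ k *ᵥ ρ)) := by
      rw [Pi.summable]
      intro s'
      simpa [smul_eq_mul] using hsumx s'
    show ((1 - γ) • ∑' k : ℕ, γ ^ k • (Pᵀ ^ k *ᵥ ρ)) s = _
    rw [Pi.smul_apply, smul_eq_mul]
    congr 1
    rw [tsum_apply hsum]
    exact tsum_congr fun k => by simp [smul_eq_mul, hxdef]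
  have hd' : ∀ s, dvisit K γ ρ π' s = (1 - γ) * ∑' k, γ ^ k * y k s := by
    intro s
    have hsum : Summable (fun k : ℕ => γ ^ k • (P'ᵀ ^ k *ᵥ ρ)) := by
      rw [Pi.summable]
      intro s'
      simpa [smul_eq_mul] using hsumy s'
    show ((1 - γ) • ∑' k : ℕ, γ ^ k • (P'ᵀ ^ k *ᵥ ρ)) s = _
    rw [Pi.smul_apply, smul_eq_mul]
    congr 1
    rw [tsum_apply hsum]
    exact tsum_congr fun k => by simp [smul_eq_mul, hydef]
  have hdiff : ∀ s, dvisit K γ ρ π s - dvisit K γ ρ π' s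
      = (1 - γ) * ∑' k, γ ^ k * (x k s - y k s) := by
    intro s
    rw [hd s, hd' s, ← mul_sub, ← Summable.tsum_sub (hsumx s) (hsumy s)]
    congr 1
    exact tsum_congr fun k => by ring
  -- pointwise absolute bound
  have hsumabs : ∀ s, Summable fun k => γ ^ k * |x k s - y k s| := by
    intro s
    refine Summable.of_norm_bounded (hgeo.mul_left 2) fun k => ?_
    rw [Real.norm_eq_abs, abs_mul, abs_of_nonneg (pow_nonneg hγ0.le k), abs_abs]
    calc γ ^ k * |x k s - y k s| ≤ γ ^ k * 2 := by
          refine mul_le_mul_of_nonneg_left ?_ (pow_nonneg hγ0.le k)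
          calc |x k s - y k s| ≤ |x k s| + |y k s| := abs_sub _ _
            _ ≤ 1 + 1 := add_le_add (hxbd k s) (hybd k s)
            _ = 2 := by norm_num
      _ = 2 * γ ^ k := by ring
  have habs : ∀ s, |dvisit K γ ρ π s - dvisit K γ ρ π' s|
      ≤ (1 - γ) * ∑' k, γ ^ k * |x k s - y k s| := by
    intro s
    rw [hdiff s, abs_mul, abs_of_nonneg hγ'.le]
    refine mul_le_mul_of_nonneg_left ?_ hγ'.le
    refine (norm_tsum_le_tsum_norm (f := fun k => γ ^ k * (x k s - y k s)) ?_).trans (le_of_eq ?_)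
    · refine (hsumabs s).congr fun k => ?_
      rw [Real.norm_eq_abs, abs_mul, abs_of_nonneg (pow_nonneg hγ0.le k)]
    · exact tsum_congr fun k => by
        rw [Real.norm_eq_abs, abs_mul, abs_of_nonneg (pow_nonneg hγ0.le k)]
  -- swap the finite sum and the tsum
  have hswap : ∑ s, ∑' k, γ ^ k * |x k s - y k s|
      = ∑' k, ∑ s, γ ^ k * |x k s - y k s| := by
    exact (Summable.tsum_finsetSum (fun s _ => hsumabs s)).symm
  have hkbd : ∀ k : ℕ, ∑ s, γ ^ k * |x k s - y k s| ≤ (k : ℝ) * γ ^ k * ε := by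
    intro k
    rw [← Finset.mul_sum]
    calc γ ^ k * ∑ s, |x k s - y k s| ≤ γ ^ k * ((k : ℝ) * ε) :=
          mul_le_mul_of_nonneg_left
            (iter_diff_le K hK π π' hπ hπ' ρ hρ0 hρ1 ε hεle k) (pow_nonneg hγ0.le k)
      _ = (k : ℝ) * γ ^ k * ε := by ring
  have hsumRHS : Summable fun k : ℕ => (k : ℝ) * γ ^ k * ε := by
    have h1 : Summable fun k : ℕ => (k : ℝ) * γ ^ k := by
      have := summable_pow_mul_geometric_of_norm_lt_one 1 (r := γ)
        (by rw [Real.norm_eq_abs, abs_of_pos hγ0]; exact hγ1)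
      simpa using this
    exact h1.mul_right ε
  have hsumLHS : Summable fun k : ℕ => ∑ s, γ ^ k * |x k s - y k s| :=
    summable_sum fun s _ => hsumabs s
  have htail : ∑' k, ∑ s, γ ^ k * |x k s - y k s| ≤ ∑' k : ℕ, (k : ℝ) * γ ^ k * ε :=
    Summable.tsum_le_tsum hkbd hsumLHS hsumRHS
  have hgeoval : ∑' k : ℕ, (k : ℝ) * γ ^ k * ε = (γ / (1 - γ) ^ 2) * ε := by
    rw [tsum_mul_right]
    congr 1
    exact tsum_coe_mul_geometric_of_norm_lt_one
      (by rw [Real.norm_eq_abs, abs_of_pos hγ0]; exact hγ1)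
  calc ∑ s, |dvisit K γ ρ π s - dvisit K γ ρ π' s|
      ≤ ∑ s, (1 - γ) * ∑' k, γ ^ k * |x k s - y k s| :=
        Finset.sum_le_sum fun s _ => habs s
    _ = (1 - γ) * ∑' k, ∑ s, γ ^ k * |x k s - y k s| := by
        rw [← Finset.mul_sum, hswap]
    _ ≤ (1 - γ) * ((γ / (1 - γ) ^ 2) * ε) := by
        rw [← hgeoval]
        exact mul_le_mul_of_nonneg_left htail hγ'.le
    _ = (γ / (1 - γ)) * ε := by
        field_simp
end
end

section
/- Let f : E → ℝ be differentiable with L-Lipschitz gradient for some L > 0, let θ* be the unique global minimizer of f (i.e., f(θ*) ≤ f(θ) for all θ, with equality only at θ = θ*), and let μ > 0 be such that the Polyak–Łojasiewicz inequality ‖∇f(θ)‖² ≥ μ·(f(θ) − f(θ*)) holds for all θ ∈ E. Then f satisfies quadratic growth: f(θ) − f(θ*) ≥ (μ/4)·‖θ − θ*‖² for all θ ∈ E. -/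
open scoped RealInnerProductSpace

lemma aux_descent {E : Type*} [NormedAddCommGroup E] [InnerProductSpace ℝ E] [CompleteSpace E]
    (f : E → ℝ) (hf : Differentiable ℝ f) (L : ℝ) (hL : 0 ≤ L)
    (hlip : ∀ a b : E, ‖gradient f a - gradient f b‖ ≤ L * ‖a - b‖)
    (x v : E) : f (x + v) ≤ f x + ⟪gradient f x, v⟫ + L / 2 * ‖v‖ ^ 2 := by
  set φ : ℝ → ℝ := fun t => f (x + t • v) - t * ⟪gradient f x, v⟫ - L / 2 * ‖v‖ ^ 2 * t ^ 2
    with hφdef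
  have hφ' : ∀ t : ℝ, HasDerivAt φ
      (⟪gradient f (x + t • v), v⟫ - ⟪gradient f x, v⟫ - L * ‖v‖ ^ 2 * t) t := by
    intro t
    have hline : HasDerivAt (fun t : ℝ => x + t • v) v t := by
      simpa using ((hasDerivAt_id t).smul_const v).const_add x
    have h1 : HasDerivAt (fun t : ℝ => f (x + t • v)) ⟪gradient f (x + t • v), v⟫ t := by
      have := (hf (x + t • v)).hasGradientAt.hasFDerivAt.comp_hasDerivAt t hline
      simpa [InnerProductSpace.toDual_apply_apply, Function.comp_def] using this
    have h2 : HasDerivAt (fun t : ℝ => t * ⟪gradient f x, v⟫) ⟪gradient f x, v⟫ t := by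
      simpa using (hasDerivAt_id t).mul_const ⟪gradient f x, v⟫
    have h3 : HasDerivAt (fun t : ℝ => L / 2 * ‖v‖ ^ 2 * t ^ 2) (L * ‖v‖ ^ 2 * t) t := by
      have := (hasDerivAt_pow 2 t).const_mul (L / 2 * ‖v‖ ^ 2)
      convert this using 1
      · rfl
      · rfl
      · norm_num
        ring
    exact (h1.sub h2).sub h3
  have hmono : AntitoneOn φ (Set.Icc 0 1) := by
    apply antitoneOn_of_deriv_nonpos (convex_Icc 0 1)
    · exact Continuous.continuousOn (continuous_iff_continuousAt.2 fun t => (hφ' t).continuousAt)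
    · intro t ht
      exact ((hφ' t).differentiableAt).differentiableWithinAt
    · intro t ht
      rw [interior_Icc] at ht
      rw [(hφ' t).deriv]
      have h4 : ⟪gradient f (x + t • v) - gradient f x, v⟫ ≤ L * ‖v‖ ^ 2 * t := by
        calc ⟪gradient f (x + t • v) - gradient f x, v⟫
            ≤ ‖gradient f (x + t • v) - gradient f x‖ * ‖v‖ := real_inner_le_norm _ _
          _ ≤ (L * ‖x + t • v - x‖) * ‖v‖ := by
              gcongr; exact hlip _ _
          _ = L * ‖v‖ ^ 2 * t := by
              rw [add_sub_cancel_left, norm_smul, Real.norm_eq_abs, abs_of_pos ht.1]; ring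
      rw [inner_sub_left] at h4
      linarith
  have := hmono (Set.left_mem_Icc.2 zero_le_one) (Set.right_mem_Icc.2 zero_le_one) zero_le_one
  simp only [hφdef] at this
  norm_num at this
  have e : (fderiv ℝ f x) v = ⟪gradient f x, v⟫ := by simp [gradient, InnerProductSpace.toDual_symm_apply]
  linarith
set_option maxHeartbeats 2000000 in
/-- a differentiable function with `L`-Lipschitz gradient, a unique global
minimizer, and the PL inequality with constant `μ > 0` satisfies quadratic growth with
constant `μ/4`. -/
theorem stmt_5 {E : Type*} [NormedAddCommGroup E] [InnerProductSpace ℝ E]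
    [FiniteDimensional ℝ E]
    (f : E → ℝ) (hf : Differentiable ℝ f)
    (L : ℝ) (hL : 0 < L)
    (hlip : ∀ θ₁ θ₂ : E, ‖gradient f θ₁ - gradient f θ₂‖ ≤ L * ‖θ₁ - θ₂‖)
    (θstar : E) (hmin : ∀ θ, f θstar ≤ f θ)
    (huniq : ∀ θ, f θ = f θstar → θ = θstar)
    (μ : ℝ) (hμ : 0 < μ)
    (hPL : ∀ θ, μ * (f θ - f θstar) ≤ ‖gradient f θ‖ ^ 2) :
    ∀ θ, (μ / 4) * ‖θ - θstar‖ ^ 2 ≤ f θ - f θstar := by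
  intro θ
  have hV0 : ∀ x : E, 0 ≤ f x - f θstar := fun x => sub_nonneg.2 (hmin x)
  have hμs : Real.sqrt μ * Real.sqrt μ = μ := Real.mul_self_sqrt hμ.le
  have hsqrtμpos : 0 < Real.sqrt μ := Real.sqrt_pos.2 hμ
  have hgradstar : gradient f θstar = 0 := by
    have hloc : IsLocalMin f θstar := Filter.Eventually.of_forall fun x => hmin x
    have h0 : fderiv ℝ f θstar = 0 := hloc.fderiv_eq_zero
    simp [gradient, h0]
  have key : ∀ η : ℝ, 0 < η → η * L ≤ 1 → η * μ ≤ 1 →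
      (1 - L * η / 2) * (Real.sqrt μ / 2) * ‖θ - θstar‖ ≤ Real.sqrt (f θ - f θstar) := by
    intro η hη hηL hημ
    obtain ⟨c, hc⟩ : ∃ c : ℝ, c = 1 - L * η / 2 := ⟨_, rfl⟩
    have hc2 : (1:ℝ)/2 ≤ c := by rw [hc]; linarith
    have hcpos : 0 < c := by linarith
    have hc1 : c ≤ 1 := by rw [hc]; nlinarith [mul_pos hL hη]
    obtain ⟨T, hT⟩ : ∃ T : E → E, T = fun x => x - η • gradient f x := ⟨_, rfl⟩
    have hTspec : ∀ x, T x - x = -(η • gradient f x) := fun x => by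
      simp [hT]
    have hTnorm : ∀ x, ‖T x - x‖ = η * ‖gradient f x‖ := by
      intro x
      rw [hTspec, norm_neg, norm_smul, Real.norm_eq_abs, abs_of_pos hη]
    have hstep : ∀ x : E, f (T x) ≤ f x - η * c * ‖gradient f x‖ ^ 2 := by
      intro x
      have hd := aux_descent f hf L hL.le hlip x (-(η • gradient f x))
      have h1 : ⟪gradient f x, -(η • gradient f x)⟫ = -(η * ‖gradient f x‖ ^ 2) := by
        rw [inner_neg_right, real_inner_smul_right, real_inner_self_eq_norm_sq]
      have h2 : ‖-(η • gradient f x)‖ ^ 2 = η ^ 2 * ‖gradient f x‖ ^ 2 := by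
        rw [norm_neg, norm_smul, Real.norm_eq_abs, abs_of_pos hη, mul_pow]
      have hTx : T x = x + -(η • gradient f x) := by
        rw [hT]; simp [sub_eq_add_neg]
      rw [hTx, hc]
      rw [h1, h2] at hd
      nlinarith [hd]
    obtain ⟨r, hrdef⟩ : ∃ r : ℝ, r = 1 - η * μ * c := ⟨_, rfl⟩
    have hetamu : 0 ≤ η * μ := by positivity
    have hr0 : 0 ≤ r := by
      rw [hrdef]
      nlinarith [mul_le_mul_of_nonneg_left hc1 hetamu]
    have hr1 : r < 1 := by
      rw [hrdef]
      nlinarith [mul_pos (mul_pos hη hμ) hcpos]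
    have hcontract : ∀ x : E, f (T x) - f θstar ≤ r * (f x - f θstar) := by
      intro x
      have h1 := hstep x
      have h2 := mul_le_mul_of_nonneg_left (hPL x) (by positivity : (0:ℝ) ≤ η * c)
      rw [hrdef]
      nlinarith
    have hstep3 : ∀ x : E, c * Real.sqrt μ / 2 * ‖T x - x‖ ≤
        Real.sqrt (f x - f θstar) - Real.sqrt (f (T x) - f θstar) := by
      intro x
      rcases eq_or_lt_of_le (hV0 x) with h0 | hpos
      · have hx : x = θstar := huniq x (by linarith)
        have hTfix : T x = x := by rw [hT]; simp [hx, hgradstar]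
        simp [hTfix, ← h0]
      · obtain ⟨N, hN'⟩ : ∃ N : ℝ, N = ‖gradient f x‖ := ⟨_, rfl⟩
        obtain ⟨a, ha'⟩ : ∃ a : ℝ, a = Real.sqrt (f x - f θstar) := ⟨_, rfl⟩
        obtain ⟨b, hb'⟩ : ∃ b : ℝ, b = Real.sqrt (f (T x) - f θstar) := ⟨_, rfl⟩
        have ha : 0 < a := ha' ▸ Real.sqrt_pos.2 hpos
        have hb : 0 ≤ b := hb' ▸ Real.sqrt_nonneg _
        have ha2 : a ^ 2 = f x - f θstar := by rw [ha']; exact Real.sq_sqrt hpos.le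
        have hb2 : b ^ 2 = f (T x) - f θstar := by rw [hb']; exact Real.sq_sqrt (hV0 _)
        have hN0 : 0 ≤ N := hN' ▸ norm_nonneg _
        have hPLs : Real.sqrt μ * a ≤ N := by
          rw [ha', hN']
          have e1 : Real.sqrt μ * Real.sqrt (f x - f θstar)
              = Real.sqrt (μ * (f x - f θstar)) := (Real.sqrt_mul hμ.le _).symm
          rw [e1]
          calc Real.sqrt (μ * (f x - f θstar)) ≤ Real.sqrt (‖gradient f x‖ ^ 2) :=
                Real.sqrt_le_sqrt (hPL x)
            _ = ‖gradient f x‖ := Real.sqrt_sq (norm_nonneg _)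
        have h1 : f (T x) ≤ f x - η * c * N ^ 2 := by rw [hN']; exact hstep x
        have hsq : b ^ 2 ≤ a ^ 2 - η * c * N ^ 2 := by rw [ha2, hb2]; linarith
        have hba : b ≤ a := by
          rw [ha', hb']
          apply Real.sqrt_le_sqrt
          nlinarith [mul_nonneg (mul_nonneg hη.le hcpos.le) (sq_nonneg N)]
        have k1 : η * c * (Real.sqrt μ * a) * N ≤ η * c * N * N :=
          mul_le_mul_of_nonneg_right
            (mul_le_mul_of_nonneg_left hPLs (by positivity)) hN0
        have k3 : η * c * N ^ 2 ≤ (a - b) * (a + b) := by nlinarith [hsq]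
        have k4 : (a - b) * (a + b) ≤ (a - b) * (2 * a) :=
          mul_le_mul_of_nonneg_left (by linarith) (by linarith)
        have k6 : a * (η * c * Real.sqrt μ * N) ≤ a * (2 * (a - b)) := by
          nlinarith [k1, k3, k4]
        have k7 : η * c * Real.sqrt μ * N ≤ 2 * (a - b) := le_of_mul_le_mul_left k6 ha
        rw [hTnorm, ← hN', ← ha', ← hb']
        nlinarith [k7]
    -- the sequence of iterates
    obtain ⟨x, hxdef⟩ : ∃ x : ℕ → E, x = fun n => T^[n] θ := ⟨_, rfl⟩
    have hx0 : x 0 = θ := by rw [hxdef]; simp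
    have hxs : ∀ n, x (n + 1) = T (x n) := fun n => by
      rw [hxdef]; exact Function.iterate_succ_apply' T n θ
    obtain ⟨g, hg⟩ : ∃ g : ℕ → ℝ, g = fun n => Real.sqrt (f (x n) - f θstar) := ⟨_, rfl⟩
    have hg0 : ∀ n, 0 ≤ g n := fun n => by rw [hg]; exact Real.sqrt_nonneg _
    have hVn : ∀ n, f (x n) - f θstar ≤ r ^ n * (f θ - f θstar) := by
      intro n
      induction n with
      | zero => simp [hx0]
      | succ n ih =>
        rw [hxs]
        calc f (T (x n)) - f θstar ≤ r * (f (x n) - f θstar) := hcontract _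
          _ ≤ r * (r ^ n * (f θ - f θstar)) := mul_le_mul_of_nonneg_left ih hr0
          _ = r ^ (n + 1) * (f θ - f θstar) := by ring
    have hgn : ∀ n, g n ≤ Real.sqrt r ^ n * Real.sqrt (f θ - f θstar) := by
      intro n
      induction n with
      | zero => simp [hg, hx0]
      | succ n ih =>
        have e1 : g (n + 1) ≤ Real.sqrt r * g n := by
          rw [hg]
          calc Real.sqrt (f (x (n + 1)) - f θstar)
              ≤ Real.sqrt (r * (f (x n) - f θstar)) := by
                apply Real.sqrt_le_sqrt; rw [hxs]; exact hcontract _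
            _ = Real.sqrt r * Real.sqrt (f (x n) - f θstar) := Real.sqrt_mul hr0 _
        calc g (n + 1) ≤ Real.sqrt r * g n := e1
          _ ≤ Real.sqrt r * (Real.sqrt r ^ n * Real.sqrt (f θ - f θstar)) :=
              mul_le_mul_of_nonneg_left ih (Real.sqrt_nonneg _)
          _ = Real.sqrt r ^ (n + 1) * Real.sqrt (f θ - f θstar) := by ring
    obtain ⟨C, hC⟩ : ∃ C : ℝ, C = 2 / (c * Real.sqrt μ) := ⟨_, rfl⟩
    have hCpos : 0 < C := by rw [hC]; positivity
    have hCid : C * (c * Real.sqrt μ / 2) = 1 := by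
      rw [hC]; field_simp
    have hconv : ∀ s t : ℝ, c * Real.sqrt μ / 2 * s ≤ t → s ≤ C * t := by
      intro s t h
      have h2 := mul_le_mul_of_nonneg_left h hCpos.le
      calc s = C * (c * Real.sqrt μ / 2) * s := by rw [hCid]; ring
        _ = C * (c * Real.sqrt μ / 2 * s) := by ring
        _ ≤ C * t := h2
    have hdistle : ∀ n, dist (x n) (x (n + 1)) ≤ C * (g n - g (n + 1)) := by
      intro n
      have h1 := hstep3 (x n)
      rw [← hxs n] at h1
      have h2 : dist (x n) (x (n + 1)) = ‖x (n + 1) - x n‖ := by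
        rw [dist_eq_norm, norm_sub_rev]
      rw [h2]
      apply hconv _ _
      rw [hg]
      exact h1
    have hdistN : ∀ n, dist θ (x n) ≤ C * Real.sqrt (f θ - f θstar) := by
      intro n
      have hgθ : g 0 = Real.sqrt (f θ - f θstar) := by rw [hg]; simp [hx0]
      calc dist θ (x n) = dist (x 0) (x n) := by rw [hx0]
        _ ≤ ∑ i ∈ Finset.range n, dist (x i) (x (i + 1)) := dist_le_range_sum_dist x n
        _ ≤ ∑ i ∈ Finset.range n, C * (g i - g (i + 1)) :=
            Finset.sum_le_sum fun i _ => hdistle i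
        _ = C * ∑ i ∈ Finset.range n, (g i - g (i + 1)) := by rw [Finset.mul_sum]
        _ = C * (g 0 - g n) := by rw [Finset.sum_range_sub' g]
        _ ≤ C * g 0 := by
            have h3 := hg0 n
            nlinarith
        _ = C * Real.sqrt (f θ - f θstar) := by rw [hgθ]
    have hcauchy : CauchySeq x := by
      apply cauchySeq_of_le_geometric (Real.sqrt r) (C * Real.sqrt (f θ - f θstar))
      · calc Real.sqrt r < Real.sqrt 1 := Real.sqrt_lt_sqrt hr0 hr1
          _ = 1 := Real.sqrt_one
      · intro n
        calc dist (x n) (x (n + 1)) ≤ C * (g n - g (n + 1)) := hdistle n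
          _ ≤ C * g n := by have h3 := hg0 (n + 1); nlinarith
          _ ≤ C * (Real.sqrt r ^ n * Real.sqrt (f θ - f θstar)) :=
              mul_le_mul_of_nonneg_left (hgn n) hCpos.le
          _ = C * Real.sqrt (f θ - f θstar) * Real.sqrt r ^ n := by ring
    obtain ⟨y, hy⟩ := cauchySeq_tendsto_of_complete hcauchy
    have hfy : Filter.Tendsto (fun n => f (x n)) Filter.atTop (nhds (f y)) :=
      (hf.continuous.tendsto y).comp hy
    have hVto : Filter.Tendsto (fun n => f (x n) - f θstar) Filter.atTop (nhds 0) := by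
      apply squeeze_zero (fun n => hV0 _) hVn
      simpa using (tendsto_pow_atTop_nhds_zero_of_lt_one hr0 hr1).mul_const (f θ - f θstar)
    have hfy2 : Filter.Tendsto (fun n => f (x n)) Filter.atTop (nhds (f θstar)) := by
      have h4 := hVto.add_const (f θstar)
      simpa using h4
    have hyeq : y = θstar := huniq y (tendsto_nhds_unique hfy hfy2)
    have hfinal : dist θ θstar ≤ C * Real.sqrt (f θ - f θstar) := by
      have h1 : Filter.Tendsto (fun n => dist θ (x n)) Filter.atTop (nhds (dist θ θstar)) := by
        rw [← hyeq]
        exact tendsto_const_nhds.dist hy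
      exact le_of_tendsto h1 (Filter.Eventually.of_forall hdistN)
    rw [dist_eq_norm] at hfinal
    have h5 := mul_le_mul_of_nonneg_left hfinal (by positivity : (0:ℝ) ≤ c * Real.sqrt μ / 2)
    have h6 : c * Real.sqrt μ / 2 * (C * Real.sqrt (f θ - f θstar)) =
        Real.sqrt (f θ - f θstar) := by
      calc c * Real.sqrt μ / 2 * (C * Real.sqrt (f θ - f θstar))
          = C * (c * Real.sqrt μ / 2) * Real.sqrt (f θ - f θstar) := by ring
        _ = Real.sqrt (f θ - f θstar) := by rw [hCid]; ring
    calc (1 - L * η / 2) * (Real.sqrt μ / 2) * ‖θ - θstar‖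
        = c * Real.sqrt μ / 2 * ‖θ - θstar‖ := by rw [hc]; ring
      _ ≤ Real.sqrt (f θ - f θstar) := by rw [h6] at h5; exact h5
  -- take η → 0
  have main : Real.sqrt μ / 2 * ‖θ - θstar‖ ≤ Real.sqrt (f θ - f θstar) := by
    apply le_of_forall_pos_le_add
    intro δ hδ
    obtain ⟨B, hB⟩ : ∃ B : ℝ, B = L / 2 * (Real.sqrt μ / 2) * ‖θ - θstar‖ := ⟨_, rfl⟩
    have hB0 : 0 ≤ B := by rw [hB]; positivity
    obtain ⟨η, hηdef⟩ : ∃ η : ℝ, η = min (1 / L) (min (1 / μ) (δ / (B + 1))) := ⟨_, rfl⟩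
    have hηpos : 0 < η := by
      rw [hηdef]
      exact lt_min (by positivity) (lt_min (by positivity) (by positivity))
    have h1 : η * L ≤ 1 := by
      have h : η ≤ 1 / L := hηdef ▸ min_le_left _ _
      rw [← le_div_iff₀ hL]; exact h
    have h2 : η * μ ≤ 1 := by
      have h : η ≤ 1 / μ := hηdef ▸ le_trans (min_le_right _ _) (min_le_left _ _)
      rw [← le_div_iff₀ hμ]; exact h
    have hk := key η hηpos h1 h2
    have h3 : η * B ≤ δ := by
      have hle : η ≤ δ / (B + 1) := hηdef ▸ le_trans (min_le_right _ _) (min_le_right _ _)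
      calc η * B ≤ δ / (B + 1) * B := mul_le_mul_of_nonneg_right hle hB0
        _ ≤ δ := by rw [div_mul_eq_mul_div, div_le_iff₀ (by linarith)]; nlinarith
    have h4 : Real.sqrt μ / 2 * ‖θ - θstar‖ =
        (1 - L * η / 2) * (Real.sqrt μ / 2) * ‖θ - θstar‖ + η * B := by
      rw [hB]; ring
    linarith
  have hL0 : 0 ≤ Real.sqrt μ / 2 * ‖θ - θstar‖ := by positivity
  have hsq := mul_self_le_mul_self hL0 main
  rw [Real.mul_self_sqrt (hV0 θ)] at hsq
  nlinarith [hsq, norm_nonneg (θ - θstar)]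
end

section
/- Let f : E → ℝ be differentiable with L-Lipschitz gradient for some L > 0, let θ* be the unique global minimizer of f (i.e., f(θ*) ≤ f(θ) for all θ, with equality only at θ = θ*), and let μ > 0 be such that the Polyak–Łojasiewicz inequality ‖∇f(θ)‖² ≥ μ·(f(θ) − f(θ*)) holds for all θ ∈ E. Then ‖∇f(θ)‖ ≥ (μ/2)·‖θ − θ*‖ for all θ ∈ E. -/
open scoped RealInnerProductSpace
open Filter Topology

lemma fderiv_apply_eq_inner_gradient {E : Type*} [NormedAddCommGroup E] [InnerProductSpace ℝ E]
    [CompleteSpace E] (f : E → ℝ) (x v : E) :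
    fderiv ℝ f x v = ⟪gradient f x, v⟫ := by
  rw [gradient, InnerProductSpace.toDual_symm_apply]

lemma descent_lemma {E : Type*} [NormedAddCommGroup E] [InnerProductSpace ℝ E]
    [CompleteSpace E] (f : E → ℝ) (hf : Differentiable ℝ f) (L : ℝ) (hL : 0 < L)
    (hlip : ∀ θ₁ θ₂ : E, ‖gradient f θ₁ - gradient f θ₂‖ ≤ L * ‖θ₁ - θ₂‖)
    (x v : E) :
    f (x + v) ≤ f x + ⟪gradient f x, v⟫ + L / 2 * ‖v‖ ^ 2 := by
  set φ : ℝ → ℝ := fun t => L / 2 * t ^ 2 * ‖v‖ ^ 2 + t * ⟪gradient f x, v⟫ - f (x + t • v)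
    with hφ
  have hderiv : ∀ t : ℝ, HasDerivAt φ
      (L * t * ‖v‖ ^ 2 + ⟪gradient f x, v⟫ - ⟪gradient f (x + t • v), v⟫) t := by
    intro t
    have hc : HasDerivAt (fun t : ℝ => x + t • v) v t := by
      simpa using ((hasDerivAt_id t).smul_const v).const_add x
    have hfc : HasDerivAt (fun t : ℝ => f (x + t • v)) (⟪gradient f (x + t • v), v⟫) t := by
      have := (hf (x + t • v)).hasFDerivAt.comp_hasDerivAt t hc
      rw [fderiv_apply_eq_inner_gradient] at this; exact this
    have h1 : HasDerivAt (fun t : ℝ => L / 2 * t ^ 2 * ‖v‖ ^ 2 + t * ⟪gradient f x, v⟫)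
        (L * t * ‖v‖ ^ 2 + ⟪gradient f x, v⟫) t := by
      have ha : HasDerivAt (fun t : ℝ => L / 2 * t ^ 2 * ‖v‖ ^ 2) (L * t * ‖v‖ ^ 2) t := by
        have : HasDerivAt (fun t : ℝ => t ^ 2) (2 * t) t := by
          simpa using hasDerivAt_pow 2 t
        have := (this.const_mul (L / 2)).mul_const (‖v‖ ^ 2)
        rw [show L * t * ‖v‖ ^ 2 = L / 2 * (2 * t) * ‖v‖ ^ 2 by ring]; exact this
      have hb : HasDerivAt (fun t : ℝ => t * ⟪gradient f x, v⟫) (⟪gradient f x, v⟫) t := by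
        simpa using (hasDerivAt_id t).mul_const (⟪gradient f x, v⟫)
      exact ha.add hb
    exact h1.sub hfc
  have hmono : φ 0 ≤ φ 1 := by
    have hnn : ∀ t ∈ Set.Icc (0:ℝ) 1,
        0 ≤ L * t * ‖v‖ ^ 2 + ⟪gradient f x, v⟫ - ⟪gradient f (x + t • v), v⟫ := by
      intro t ht
      have h1 : ⟪gradient f (x + t • v), v⟫ - ⟪gradient f x, v⟫
          = ⟪gradient f (x + t • v) - gradient f x, v⟫ := by
        rw [inner_sub_left]
      have h2 : ⟪gradient f (x + t • v) - gradient f x, v⟫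
          ≤ ‖gradient f (x + t • v) - gradient f x‖ * ‖v‖ :=
        real_inner_le_norm _ _
      have h3 : ‖gradient f (x + t • v) - gradient f x‖ ≤ L * (t * ‖v‖) := by
        have := hlip (x + t • v) x
        simpa [norm_smul, abs_of_nonneg ht.1] using this
      nlinarith [norm_nonneg v, mul_le_mul_of_nonneg_right h3 (norm_nonneg v)]
    have : MonotoneOn φ (Set.Icc (0:ℝ) 1) := by
      apply monotoneOn_of_deriv_nonneg (convex_Icc 0 1)
      · exact Continuous.continuousOn (by
          have : Differentiable ℝ φ := fun t => (hderiv t).differentiableAt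
          exact this.continuous)
      · intro t _
        exact ((hderiv t).differentiableAt).differentiableWithinAt
      · intro t ht
        rw [(hderiv t).deriv]
        exact hnn t (Set.mem_Icc_of_Ioo (by simpa using ht))
    exact this (by norm_num) (by norm_num) (by norm_num)
  simp only [hφ] at hmono
  norm_num at hmono
  linarith [hmono, fderiv_apply_eq_inner_gradient f x v]

set_option maxHeartbeats 1000000 in
lemma key_h {E : Type*} [NormedAddCommGroup E] [InnerProductSpace ℝ E]
    [FiniteDimensional ℝ E]
    (f : E → ℝ) (hf : Differentiable ℝ f)
    (L : ℝ) (hL : 0 < L)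
    (hlip : ∀ θ₁ θ₂ : E, ‖gradient f θ₁ - gradient f θ₂‖ ≤ L * ‖θ₁ - θ₂‖)
    (θstar : E) (hmin : ∀ θ, f θstar ≤ f θ)
    (huniq : ∀ θ, f θ = f θstar → θ = θstar)
    (μ : ℝ) (hμ : 0 < μ)
    (hPL : ∀ θ, μ * (f θ - f θstar) ≤ ‖gradient f θ‖ ^ 2)
    (h : ℝ) (hh0 : 0 < h) (hhL : h * L ≤ 1) (hhμ : h * μ ≤ 1) (θ : E) :
    (1 - L * h / 2) * (Real.sqrt μ * ‖θ - θstar‖) ≤ 2 * Real.sqrt (f θ - f θstar) := by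
  set c : ℝ := 1 - L * h / 2 with hc_def
  clear_value c
  have hc0 : 0 < c := by rw [hc_def]; nlinarith
  have hc1 : c ≤ 1 := by rw [hc_def]; nlinarith
  set T : E → E := fun y => y - h • gradient f y with hT
  set x : ℕ → E := fun k => T^[k] θ with hx
  have hx0 : x 0 = θ := rfl
  have hxsucc : ∀ k, x (k + 1) = x k - h • gradient f (x k) := by
    intro k
    simp only [hx, Function.iterate_succ_apply', hT]
  set e : ℕ → ℝ := fun k => f (x k) - f θstar with he
  set s : ℕ → ℝ := fun k => Real.sqrt (e k) with hs
  have he0 : ∀ k, 0 ≤ e k := fun k => sub_nonneg.2 (hmin _)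
  have hs0 : ∀ k, 0 ≤ s k := fun k => Real.sqrt_nonneg _
  have hsq : ∀ k, s k ^ 2 = e k := fun k => Real.sq_sqrt (he0 k)
  -- descent inequality
  have hdec : ∀ k, e (k + 1) ≤ e k - h * c * ‖gradient f (x k)‖ ^ 2 := by
    intro k
    have hd := descent_lemma f hf L hL hlip (x k) (-(h • gradient f (x k)))
    have heq : x k + -(h • gradient f (x k)) = x (k + 1) := by
      rw [hxsucc]; abel
    rw [heq] at hd
    have hinner : ⟪gradient f (x k), -(h • gradient f (x k))⟫
        = -(h * ‖gradient f (x k)‖ ^ 2) := by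
      rw [inner_neg_right, real_inner_smul_right, real_inner_self_eq_norm_sq]
    rw [hinner] at hd
    have hnorm : ‖-(h • gradient f (x k))‖ ^ 2 = h ^ 2 * ‖gradient f (x k)‖ ^ 2 := by
      rw [norm_neg, norm_smul, mul_pow, Real.norm_eq_abs, sq_abs]
    rw [hnorm] at hd
    have hexp : h * c * ‖gradient f (x k)‖ ^ 2
        = h * ‖gradient f (x k)‖ ^ 2 - L / 2 * (h ^ 2 * ‖gradient f (x k)‖ ^ 2) := by
      rw [hc_def]; ring
    simp only [he]
    linarith [hd, hexp]
  have hemono : ∀ k, e (k + 1) ≤ e k := by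
    intro k
    linarith [hdec k,
      mul_nonneg (mul_nonneg hh0.le hc0.le) (sq_nonneg ‖gradient f (x k)‖)]
  have heanti : Antitone e := antitone_nat_of_succ_le hemono
  have hsanti : Antitone s := fun n m hnm => Real.sqrt_le_sqrt (heanti hnm)
  -- step bound
  have hstep : ∀ k, c * Real.sqrt μ * ‖x (k + 1) - x k‖ ≤ 2 * (s k - s (k + 1)) := by
    intro k
    set g : ℝ := ‖gradient f (x k)‖ with hg
    have hg0 : 0 ≤ g := norm_nonneg _
    have hxk : ‖x (k + 1) - x k‖ = h * g := by
      rw [hxsucc]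
      simp [norm_smul, abs_of_nonneg hh0.le]
      exact Or.inl hg.symm
    rw [hxk]
    rcases eq_or_lt_of_le (he0 k) with hek0 | hek
    · -- e k = 0 : x k is the minimizer, gradient is zero
      have hfxk : f (x k) = f θstar := by
        have := hek0.symm; simp only [he] at this; linarith
      have hxkstar : x k = θstar := huniq _ hfxk
      have hgrad0 : gradient f (x k) = 0 := by
        rw [hxkstar]
        have hloc : IsLocalMin f θstar := Filter.Eventually.of_forall hmin
        rw [gradient, hloc.fderiv_eq_zero]
        simp
      have hg0' : g = 0 := by rw [hg, hgrad0, norm_zero]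
      have hek1 : e (k + 1) = 0 := le_antisymm (by rw [hek0]; exact hemono k) (he0 (k + 1))
      have hsk : s k = 0 := by rw [hs]; simp [← hek0]
      have hsk1 : s (k + 1) = 0 := by rw [hs]; simp [hek1]
      rw [hg0', hsk, hsk1]
      norm_num
    · -- e k > 0
      have hPLk : μ * e k ≤ g ^ 2 := hPL (x k)
      have hg2 : 0 < g ^ 2 := lt_of_lt_of_le (mul_pos hμ hek) hPLk
      have hgpos : 0 < g := by nlinarith [hg0, hg2]
      have hskpos : 0 < s k := Real.sqrt_pos.2 hek
      have h1 : Real.sqrt μ * s k ≤ g := by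
        rw [hs, ← Real.sqrt_mul hμ.le]
        calc Real.sqrt (μ * e k) ≤ Real.sqrt (g ^ 2) := Real.sqrt_le_sqrt hPLk
          _ = g := Real.sqrt_sq hg0
      have hchg : 0 ≤ c * h * g := by positivity
      have h4 : c * h * g * (Real.sqrt μ * s k) ≤ c * h * g * g :=
        mul_le_mul_of_nonneg_left h1 hchg
      have h5 : c * h * g * g ≤ e k - e (k + 1) := by
        have hexp : c * h * g * g = h * c * g ^ 2 := by ring
        linarith [hdec k, hexp]
      have h3 : e k - e (k + 1) ≤ 2 * (s k - s (k + 1)) * s k := by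
        nlinarith [hsq k, hsq (k + 1), hsanti (Nat.le_succ k), hs0 (k + 1),
          sq_nonneg (s k - s (k + 1))]
      have h6 : c * Real.sqrt μ * (h * g) * s k ≤ 2 * (s k - s (k + 1)) * s k := by
        calc c * Real.sqrt μ * (h * g) * s k = c * h * g * (Real.sqrt μ * s k) := by ring
          _ ≤ c * h * g * g := h4
          _ ≤ e k - e (k + 1) := h5
          _ ≤ 2 * (s k - s (k + 1)) * s k := h3
      exact le_of_mul_le_mul_right h6 hskpos
  -- geometric decay
  set r : ℝ := 1 - μ * h * c with hr_def
  clear_value r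
  have hμh : (0:ℝ) ≤ μ * h := by positivity
  have hμhc : μ * h * c ≤ μ * h * 1 := mul_le_mul_of_nonneg_left hc1 hμh
  have hr0 : 0 ≤ r := by rw [hr_def]; nlinarith [hμhc]
  have hr1 : r < 1 := by rw [hr_def]; nlinarith [mul_pos (mul_pos hμ hh0) hc0]
  have hgeo : ∀ k, e (k + 1) ≤ r * e k := by
    intro k
    have hA := mul_le_mul_of_nonneg_left (hPL (x k)) (mul_nonneg hh0.le hc0.le)
    have hd := hdec k
    simp only [he] at hd ⊢
    rw [hr_def]
    nlinarith [hd, hA]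
  have hbound : ∀ k, e k ≤ e 0 * r ^ k := by
    intro k
    induction k with
    | zero => simp
    | succ k ih =>
      calc e (k + 1) ≤ r * e k := hgeo k
        _ ≤ r * (e 0 * r ^ k) := mul_le_mul_of_nonneg_left ih hr0
        _ = e 0 * r ^ (k + 1) := by ring
  have helim : Tendsto e atTop (𝓝 0) := by
    apply squeeze_zero he0 hbound
    have := (tendsto_pow_atTop_nhds_zero_of_lt_one hr0 hr1).const_mul (e 0)
    simpa using this
  have hslim : Tendsto s atTop (𝓝 0) := by
    have := (Real.continuous_sqrt.tendsto 0).comp helim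
    simpa [hs, Function.comp_def] using this
  -- telescoping distance bound
  have hdistle : ∀ N M, N ≤ M → c * Real.sqrt μ * dist (x N) (x M) ≤ 2 * (s N - s M) := by
    intro N M hNM
    induction M, hNM using Nat.le_induction with
    | base => simp
    | succ M hNM ih =>
      have htri : dist (x N) (x (M + 1)) ≤ dist (x N) (x M) + dist (x M) (x (M + 1)) :=
        dist_triangle _ _ _
      have hst : c * Real.sqrt μ * dist (x M) (x (M + 1)) ≤ 2 * (s M - s (M + 1)) := by
        rw [dist_eq_norm, norm_sub_rev]
        exact hstep M
      have hcs : 0 ≤ c * Real.sqrt μ := mul_nonneg hc0.le (Real.sqrt_nonneg μ)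
      nlinarith [mul_le_mul_of_nonneg_left htri hcs]
  have hcs_pos : 0 < c * Real.sqrt μ := mul_pos hc0 (Real.sqrt_pos.2 hμ)
  -- Cauchy sequence
  have hcauchy : CauchySeq x := by
    apply cauchySeq_of_le_tendsto_0 (fun N => 2 / (c * Real.sqrt μ) * s N)
    · intro n m N hn hm
      have key : ∀ a b : ℕ, N ≤ a → a ≤ b → dist (x a) (x b) ≤ 2 / (c * Real.sqrt μ) * s N := by
        intro a b ha hab
        rw [div_mul_eq_mul_div, le_div_iff₀ hcs_pos]
        have h1 := hdistle a b hab
        have h2 : s a ≤ s N := hsanti ha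
        have h3 : 0 ≤ s b := hs0 b
        nlinarith [h1]
      rcases le_total n m with hnm | hmn
      · exact key n m hn hnm
      · rw [dist_comm]; exact key m n hm hmn
    · have := hslim.const_mul (2 / (c * Real.sqrt μ))
      simpa using this
  obtain ⟨y, hy⟩ := cauchySeq_tendsto_of_complete hcauchy
  have hfy : f y = f θstar := by
    have h1 : Tendsto (fun k => f (x k)) atTop (𝓝 (f y)) :=
      (hf.continuous.tendsto y).comp hy
    have h2 : Tendsto (fun k => f (x k)) atTop (𝓝 (f θstar)) := by
      have heq : (fun k => f (x k)) = fun k => e k + f θstar := by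
        funext k; simp [he]
      rw [heq]
      have := helim.add_const (f θstar)
      rwa [zero_add] at this
    exact tendsto_nhds_unique h1 h2
  have hy' : y = θstar := huniq y hfy
  have hdd : Tendsto (fun N => c * Real.sqrt μ * dist (x 0) (x N)) atTop
      (𝓝 (c * Real.sqrt μ * dist (x 0) y)) :=
    (tendsto_const_nhds.dist hy).const_mul _
  have hle : ∀ N, c * Real.sqrt μ * dist (x 0) (x N) ≤ 2 * s 0 := by
    intro N
    have := hdistle 0 N (Nat.zero_le N)
    nlinarith [hs0 N]
  have hfinal : c * Real.sqrt μ * dist (x 0) y ≤ 2 * s 0 :=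
    le_of_tendsto hdd (Filter.Eventually.of_forall hle)
  rw [hx0, hy', dist_eq_norm] at hfinal
  have hs0eq : s 0 = Real.sqrt (f θ - f θstar) := by rw [hs]; simp [he, hx0]
  rw [hs0eq] at hfinal
  calc c * (Real.sqrt μ * ‖θ - θstar‖)
      = c * Real.sqrt μ * ‖θ - θstar‖ := by ring
    _ ≤ 2 * Real.sqrt (f θ - f θstar) := hfinal

set_option maxHeartbeats 1000000 in
/-- a differentiable function with `L`-Lipschitz gradient, a unique global
minimizer, and the PL inequality with constant `μ > 0` satisfies
`‖∇f(θ)‖ ≥ (μ/2)·‖θ − θ*‖`. -/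
theorem stmt_6 {E : Type*} [NormedAddCommGroup E] [InnerProductSpace ℝ E]
    [FiniteDimensional ℝ E]
    (f : E → ℝ) (hf : Differentiable ℝ f)
    (L : ℝ) (hL : 0 < L)
    (hlip : ∀ θ₁ θ₂ : E, ‖gradient f θ₁ - gradient f θ₂‖ ≤ L * ‖θ₁ - θ₂‖)
    (θstar : E) (hmin : ∀ θ, f θstar ≤ f θ)
    (huniq : ∀ θ, f θ = f θstar → θ = θstar)
    (μ : ℝ) (hμ : 0 < μ)
    (hPL : ∀ θ, μ * (f θ - f θstar) ≤ ‖gradient f θ‖ ^ 2) :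
    ∀ θ, (μ / 2) * ‖θ - θstar‖ ≤ ‖gradient f θ‖ := by
  intro θ
  have he0 : 0 ≤ f θ - f θstar := sub_nonneg.2 (hmin θ)
  have hδ : 0 < min (1 / L) (1 / μ) := lt_min (by positivity) (by positivity)
  have hkey : ∀ h ∈ Set.Ioc (0 : ℝ) (min (1 / L) (1 / μ)),
      (1 - L * h / 2) * (Real.sqrt μ * ‖θ - θstar‖)
        ≤ 2 * Real.sqrt (f θ - f θstar) := by
    rintro h ⟨hh0, hhle⟩
    apply key_h f hf L hL hlip θstar hmin huniq μ hμ hPL h hh0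
    · have h1 : h ≤ 1 / L := le_trans hhle (min_le_left _ _)
      have h2 : h * L ≤ (1 / L) * L := mul_le_mul_of_nonneg_right h1 hL.le
      have h3 : (1 / L) * L = 1 := one_div_mul_cancel hL.ne'
      linarith
    · have h1 : h ≤ 1 / μ := le_trans hhle (min_le_right _ _)
      have h2 : h * μ ≤ (1 / μ) * μ := mul_le_mul_of_nonneg_right h1 hμ.le
      have h3 : (1 / μ) * μ = 1 := one_div_mul_cancel hμ.ne'
      linarith
  have hlim : Filter.Tendsto
      (fun h : ℝ => (1 - L * h / 2) * (Real.sqrt μ * ‖θ - θstar‖))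
      (nhdsWithin 0 (Set.Ioi 0)) (nhds (Real.sqrt μ * ‖θ - θstar‖)) := by
    have hcont : Continuous
        (fun h : ℝ => (1 - L * h / 2) * (Real.sqrt μ * ‖θ - θstar‖)) := by
      continuity
    have : Filter.Tendsto (fun h : ℝ => (1 - L * h / 2) * (Real.sqrt μ * ‖θ - θstar‖))
        (nhdsWithin 0 (Set.Ioi 0)) (nhds ((1 - L * 0 / 2) * (Real.sqrt μ * ‖θ - θstar‖))) :=
      (hcont.tendsto 0).mono_left nhdsWithin_le_nhds
    simpa using this
  have hev : ∀ᶠ h in nhdsWithin (0:ℝ) (Set.Ioi 0),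
      (1 - L * h / 2) * (Real.sqrt μ * ‖θ - θstar‖)
        ≤ 2 * Real.sqrt (f θ - f θstar) :=
    Filter.eventually_of_mem
      (Ioc_mem_nhdsGT_of_mem (Set.mem_Ico.mpr ⟨le_refl 0, hδ⟩)) hkey
  have hfin : Real.sqrt μ * ‖θ - θstar‖ ≤ 2 * Real.sqrt (f θ - f θstar) :=
    le_of_tendsto hlim hev
  have hA : (Real.sqrt μ * ‖θ - θstar‖) ^ 2 = μ * ‖θ - θstar‖ ^ 2 := by
    rw [mul_pow, Real.sq_sqrt hμ.le]
  have hB : (2 * Real.sqrt (f θ - f θstar)) ^ 2 = 4 * (f θ - f θstar) := by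
    rw [mul_pow, Real.sq_sqrt he0]; norm_num
  have hsq : (Real.sqrt μ * ‖θ - θstar‖) ^ 2 ≤ (2 * Real.sqrt (f θ - f θstar)) ^ 2 :=
    pow_le_pow_left₀ (by positivity) hfin 2
  rw [hA, hB] at hsq
  have hsq2 : (μ / 2 * ‖θ - θstar‖) ^ 2 ≤ ‖gradient f θ‖ ^ 2 := by
    calc (μ / 2 * ‖θ - θstar‖) ^ 2 = μ / 4 * (μ * ‖θ - θstar‖ ^ 2) := by ring
      _ ≤ μ / 4 * (4 * (f θ - f θstar)) :=
          mul_le_mul_of_nonneg_left hsq (by positivity)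
      _ = μ * (f θ - f θstar) := by ring
      _ ≤ ‖gradient f θ‖ ^ 2 := hPL θ
  have hfin2 := Real.sqrt_le_sqrt hsq2
  rwa [Real.sqrt_sq (by positivity), Real.sqrt_sq (norm_nonneg _)] at hfin2
end

section
/- For every policy π and all τ₁, τ₂ ≥ 0: J_{τ₁}(π) − J_{τ₂}(π) = ((τ₁ − τ₂)/(1−γ)) · ∑_s d_ρ^π(s)·E(π,s); consequently |J_{τ₁}(π) − J_{τ₂}(π)| ≤ |τ₁ − τ₂| · log(card A)/(1−γ). -/
open Finset Matrix

noncomputable section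

variable {S A : Type*}

section aux

variable [Fintype S] [Fintype A] [DecidableEq S]

/-- Powers of the policy matrix are row-stochastic. -/
lemma pmat_pow_stoch (K : S → A → S → ℝ) (hK : IsKernel K) (π : S → A → ℝ)
    (hπ : IsPolicy π) (k : ℕ) :
    (∀ s s', 0 ≤ ((Pmat K π) ^ k) s s') ∧ (∀ s, ∑ s', ((Pmat K π) ^ k) s s' = 1) := by
  induction k with
  | zero =>
    constructor
    · intro s s'
      simp only [pow_zero, Matrix.one_apply]
      split <;> norm_num
    · intro s
      simp [Matrix.one_apply]
  | succ k ih =>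
    have hP0 : ∀ s s', 0 ≤ Pmat K π s s' := fun s s' =>
      Finset.sum_nonneg fun a _ => mul_nonneg (hπ.1 s a) (hK.1 s a s')
    have hP1 : ∀ s, ∑ s', Pmat K π s s' = 1 := by
      intro s
      simp only [Pmat, Matrix.of_apply]
      rw [Finset.sum_comm]
      simp_rw [← Finset.mul_sum, hK.2, mul_one]
      exact hπ.2 s
    constructor
    · intro s s'
      rw [pow_succ, Matrix.mul_apply]
      exact Finset.sum_nonneg fun t _ => mul_nonneg ((ih.1) s t) (hP0 t s')
    · intro s
      simp only [pow_succ, Matrix.mul_apply]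
      rw [Finset.sum_comm]
      simp_rw [← Finset.mul_sum, hP1, mul_one]
      exact ih.2 s

lemma entS_nonneg (π : S → A → ℝ) (hπ : IsPolicy π) (s : S) : 0 ≤ entS π s := by
  refine Finset.sum_nonneg fun a _ => ?_
  have h1 : π s a ≤ 1 := by
    rw [← hπ.2 s]
    exact Finset.single_le_sum (fun b _ => hπ.1 s b) (Finset.mem_univ a)
  have := Real.negMulLog_nonneg (hπ.1 s a) h1
  simpa [Real.negMulLog] using this

lemma entS_le_log [Nonempty A] (π : S → A → ℝ) (hπ : IsPolicy π) (s : S) :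
    entS π s ≤ Real.log (Fintype.card A) := by
  have hn : (0 : ℝ) < Fintype.card A := by
    exact_mod_cast Fintype.card_pos
  have key : ∀ p : ℝ, 0 ≤ p →
      -(p * Real.log p) ≤ p * Real.log (Fintype.card A) + (1 / Fintype.card A - p) := by
    intro p hp
    rcases eq_or_lt_of_le hp with h | h
    · rw [← h]
      simp only [Real.log_zero, mul_zero, neg_zero, zero_mul, zero_add, sub_zero]
      positivity
    · have hlog : Real.log (1 / ((Fintype.card A : ℝ) * p)) ≤ 1 / ((Fintype.card A : ℝ) * p) - 1 :=
        Real.log_le_sub_one_of_pos (by positivity)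
      have hrw : Real.log (1 / ((Fintype.card A : ℝ) * p)) =
          -(Real.log (Fintype.card A) + Real.log p) := by
        rw [one_div, Real.log_inv, Real.log_mul (ne_of_gt hn) (ne_of_gt h)]
      rw [hrw] at hlog
      have := mul_le_mul_of_nonneg_left hlog h.le
      have hinv : p * (1 / ((Fintype.card A : ℝ) * p) - 1) = 1 / (Fintype.card A : ℝ) - p := by
        field_simp
      rw [hinv] at this
      nlinarith [this]
  calc entS π s ≤ ∑ a, (π s a * Real.log (Fintype.card A) + (1 / Fintype.card A - π s a)) :=
        Finset.sum_le_sum fun a _ => key (π s a) (hπ.1 s a)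
    _ = Real.log (Fintype.card A) := by
        rw [Finset.sum_add_distrib, ← Finset.sum_mul, hπ.2 s, Finset.sum_sub_distrib, hπ.2 s]
        simp only [Finset.sum_const, Finset.card_univ, nsmul_eq_mul, one_mul]
        rw [mul_one_div, div_self (ne_of_gt hn)]
        ring

end aux

/-- the regularized return depends affinely on the regularization weight,
with difference `((τ₁−τ₂)/(1−γ)) ∑_s d_ρ^π(s) E(π,s)`, bounded by `|τ₁−τ₂| log|A|/(1−γ)`. -/
theorem stmt_12 [Fintype S] [Fintype A] [DecidableEq S] [Nonempty S] [Nonempty A]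
    (K : S → A → S → ℝ) (hK : IsKernel K)
    (γ : ℝ) (hγ0 : 0 < γ) (hγ1 : γ < 1)
    (ρ : S → ℝ) (hρ0 : ∀ s, 0 ≤ ρ s) (hρ1 : ∑ s, ρ s = 1)
    (r : S → A → ℝ)
    (π : S → A → ℝ) (hπ : IsPolicy π)
    (τ₁ τ₂ : ℝ) (hτ₁ : 0 ≤ τ₁) (hτ₂ : 0 ≤ τ₂) :
    Jreg K r γ τ₁ ρ π - Jreg K r γ τ₂ ρ π =
      ((τ₁ - τ₂) / (1 - γ)) * ∑ s, dvisit K γ ρ π s * entS π s ∧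
    |Jreg K r γ τ₁ ρ π - Jreg K r γ τ₂ ρ π| ≤ |τ₁ - τ₂| * Real.log (Fintype.card A) / (1 - γ) := by
  have hγ' : (0:ℝ) < 1 - γ := by linarith
  set P := Pmat K π with hPdef
  have hpow := pmat_pow_stoch K hK π hπ
  have hle1 : ∀ (k : ℕ) s s', (P ^ k) s s' ≤ 1 := by
    intro k s s'
    rw [← (hpow k).2 s]
    exact Finset.single_le_sum (fun t _ => (hpow k).1 s t) (Finset.mem_univ s')
  have hgeo : Summable fun k : ℕ => γ ^ k := summable_geometric_of_lt_one hγ0.le hγ1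
  -- mulVec expression
  have hmv : ∀ (M : Matrix S S ℝ) (v : S → ℝ) (s : S), (M *ᵥ v) s = ∑ s', M s s' * v s' := by
    intro M v s; simp [Matrix.mulVec, dotProduct]
  -- abs bound on mulVec by stochastic powers
  have habs : ∀ (k : ℕ) (v : S → ℝ) (s : S), |((P ^ k) *ᵥ v) s| ≤ ∑ s', |v s'| := by
    intro k v s
    rw [hmv]
    refine (Finset.abs_sum_le_sum_abs _ _).trans ?_
    refine Finset.sum_le_sum fun s' _ => ?_
    rw [abs_mul, abs_of_nonneg ((hpow k).1 s s')]
    exact mul_le_of_le_one_left (abs_nonneg _) (hle1 k s s')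
  -- pointwise summability of the value series
  have hsumpt : ∀ (v : S → ℝ) (s : S), Summable fun k : ℕ => γ ^ k * ((P ^ k) *ᵥ v) s := by
    intro v s
    refine Summable.of_norm_bounded (g := fun k => (∑ s', |v s'|) * γ ^ k) (hgeo.mul_left _) ?_
    intro k
    rw [Real.norm_eq_abs, abs_mul, abs_pow, abs_of_nonneg hγ0.le, mul_comm]
    exact mul_le_mul_of_nonneg_right (habs k v s) (pow_nonneg hγ0.le k)
  have hsumPi : ∀ v : S → ℝ, Summable fun k : ℕ => γ ^ k • ((P ^ k) *ᵥ v) := by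
    intro v
    exact Pi.summable.mpr fun s => by simpa [smul_eq_mul] using hsumpt v s
  -- value function pointwise
  have hV : ∀ τ s, Vreg K r γ τ π s = ∑' k : ℕ, γ ^ k * ((P ^ k) *ᵥ regCost r τ π) s := by
    intro τ s
    rw [Vreg, tsum_apply (hsumPi _)]
    simp [smul_eq_mul]
  set E := entS π with hEdef
  -- w k s and its properties
  set w : ℕ → S → ℝ := fun k s => ∑ s', (P ^ k) s' s * ρ s' with hwdef
  have hw0 : ∀ k s, 0 ≤ w k s := fun k s =>
    Finset.sum_nonneg fun s' _ => mul_nonneg ((hpow k).1 s' s) (hρ0 s')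
  have hw1 : ∀ k, ∑ s, w k s = 1 := by
    intro k
    rw [hwdef]
    simp only
    rw [Finset.sum_comm]
    simp_rw [← Finset.sum_mul, hPdef, (hpow k).2]
    simpa using hρ1
  have hwle : ∀ k s, w k s ≤ 1 := by
    intro k s
    rw [← hw1 k]
    exact Finset.single_le_sum (fun t _ => hw0 k t) (Finset.mem_univ s)
  -- dvisit pointwise
  have hwvec : ∀ k : ℕ, ((Pᵀ) ^ k *ᵥ ρ) = w k := by
    intro k
    funext s
    rw [← Matrix.transpose_pow, hmv]
    simp [Matrix.transpose_apply, hwdef]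
  have hsumw : ∀ s, Summable fun k : ℕ => γ ^ k * w k s := by
    intro s
    refine Summable.of_norm_bounded (g := fun k => γ ^ k) hgeo ?_
    intro k
    rw [Real.norm_eq_abs, abs_mul, abs_pow, abs_of_nonneg hγ0.le,
      abs_of_nonneg (hw0 k s)]
    exact mul_le_of_le_one_right (pow_nonneg hγ0.le k) (hwle k s)
  have hd : ∀ s, dvisit K γ ρ π s = (1 - γ) * ∑' k : ℕ, γ ^ k * w k s := by
    intro s
    rw [dvisit]
    simp_rw [← hPdef, hwvec]
    have hsumPiw : Summable fun k : ℕ => γ ^ k • (w k) :=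
      Pi.summable.mpr fun s => by simpa [smul_eq_mul] using hsumw s
    rw [Pi.smul_apply, tsum_apply hsumPiw]
    simp [smul_eq_mul]
  -- t k
  set t : ℕ → ℝ := fun k => ∑ s, w k s * E s with htdef
  have hL0 : (0:ℝ) ≤ Real.log (Fintype.card A) := by
    apply Real.log_nonneg
    exact_mod_cast Fintype.card_pos
  have hE0 : ∀ s, 0 ≤ E s := entS_nonneg π hπ
  have hEL : ∀ s, E s ≤ Real.log (Fintype.card A) := entS_le_log π hπ
  have ht0 : ∀ k, 0 ≤ t k := fun k =>
    Finset.sum_nonneg fun s _ => mul_nonneg (hw0 k s) (hE0 s)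
  have htL : ∀ k, t k ≤ Real.log (Fintype.card A) := by
    intro k
    calc t k ≤ ∑ s, w k s * Real.log (Fintype.card A) :=
          Finset.sum_le_sum fun s _ => mul_le_mul_of_nonneg_left (hEL s) (hw0 k s)
      _ = Real.log (Fintype.card A) := by rw [← Finset.sum_mul, hw1 k, one_mul]
  have hsumt : Summable fun k : ℕ => γ ^ k * t k := by
    refine Summable.of_norm_bounded (g := fun k => Real.log (Fintype.card A) * γ ^ k)
      (hgeo.mul_left _) ?_
    intro k
    rw [Real.norm_eq_abs, abs_mul, abs_pow, abs_of_nonneg hγ0.le, abs_of_nonneg (ht0 k),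
      mul_comm]
    exact mul_le_mul_of_nonneg_right (htL k) (pow_nonneg hγ0.le k)
  set T : ℝ := ∑' k : ℕ, γ ^ k * t k with hTdef
  have hT0 : 0 ≤ T :=
    tsum_nonneg fun k => mul_nonneg (pow_nonneg hγ0.le k) (ht0 k)
  have hTle : T ≤ Real.log (Fintype.card A) / (1 - γ) := by
    have : T ≤ ∑' k : ℕ, Real.log (Fintype.card A) * γ ^ k := by
      refine Summable.tsum_le_tsum ?_ hsumt (hgeo.mul_left _)
      intro k
      rw [mul_comm (Real.log _)]
      exact mul_le_mul_of_nonneg_left (htL k) (pow_nonneg hγ0.le k)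
    rw [tsum_mul_left, tsum_geometric_of_lt_one hγ0.le hγ1] at this
    calc T ≤ Real.log (Fintype.card A) * (1 - γ)⁻¹ := this
      _ = Real.log (Fintype.card A) / (1 - γ) := by rw [div_eq_mul_inv]
  -- dvisit sum identity
  have hdE : ∑ s, dvisit K γ ρ π s * E s = (1 - γ) * T := by
    have : ∀ s, dvisit K γ ρ π s * E s = (1 - γ) * ∑' k : ℕ, γ ^ k * w k s * E s := by
      intro s
      rw [hd s, mul_assoc, ← tsum_mul_right]
    simp_rw [this, ← Finset.mul_sum]
    congr 1
    rw [← Summable.tsum_finsetSum fun s _ => (hsumw s).mul_right (E s)]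
    rw [hTdef]
    congr 1
    funext k
    rw [htdef]
    simp only [Finset.mul_sum]
    congr 1
    funext s
    ring
  -- J difference
  have hJ : Jreg K r γ τ₁ ρ π - Jreg K r γ τ₂ ρ π = (τ₁ - τ₂) * T := by
    have hVdiff : ∀ s, Vreg K r γ τ₁ π s - Vreg K r γ τ₂ π s
        = (τ₁ - τ₂) * ∑' k : ℕ, γ ^ k * ((P ^ k) *ᵥ E) s := by
      intro s
      rw [hV, hV, ← Summable.tsum_sub (hsumpt _ s) (hsumpt _ s), ← tsum_mul_left]
      congr 1
      funext k
      have hc : ∀ s', regCost r τ₁ π s' - regCost r τ₂ π s' = (τ₁ - τ₂) * E s' := by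
        intro s'
        rw [regCost, regCost, hEdef]
        ring
      rw [hmv, hmv, hmv]
      have h2 : ∑ s', (P ^ k) s s' * (regCost r τ₁ π s' - regCost r τ₂ π s')
          = (τ₁ - τ₂) * ∑ s', (P ^ k) s s' * E s' := by
        rw [Finset.mul_sum]
        exact Finset.sum_congr rfl fun s' _ => by rw [hc s']; ring
      rw [← mul_sub, ← Finset.sum_sub_distrib]
      simp_rw [← mul_sub]
      rw [h2]
      ring
    rw [Jreg, Jreg, ← Finset.sum_sub_distrib]
    simp_rw [← mul_sub, hVdiff]
    have hswap : ∑ s, ρ s * ((τ₁ - τ₂) * ∑' k : ℕ, γ ^ k * ((P ^ k) *ᵥ E) s)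
        = (τ₁ - τ₂) * ∑ s, ∑' k : ℕ, ρ s * (γ ^ k * ((P ^ k) *ᵥ E) s) := by
      rw [Finset.mul_sum]
      refine Finset.sum_congr rfl fun s _ => ?_
      rw [tsum_mul_left]
      ring
    rw [hswap, ← Summable.tsum_finsetSum fun s _ => (hsumpt E s).mul_left (ρ s)]
    congr 1
    rw [hTdef]
    congr 1
    funext k
    simp_rw [hmv, htdef, hwdef]
    simp only [Finset.mul_sum, Finset.sum_mul]
    rw [Finset.sum_comm]
    exact Finset.sum_congr rfl fun _ _ => Finset.sum_congr rfl fun _ _ => by ring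
  constructor
  · rw [hJ, hdE]
    field_simp
  · rw [hJ, abs_mul, abs_of_nonneg hT0, mul_div_assoc]
    exact mul_le_mul_of_nonneg_left hTle (abs_nonneg _)
end
end
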